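/- arXiv:1109.3704 — 13 statements merged into one kernel-verified Lean document; each statement's English description precedes it below -/
import Mathlib

section
/- Let V be a finite-dimensional inner product space over ℂ of dimension n, let T : V → V be a self-adjoint linear map, and let v₁,…,v_r be an orthonormal family in V with 1 ≤ r ≤ n. Then the family can be extended to an ordered orthonormal basis v₁,…,v_n of V such that for all 1 ≤ i,j ≤ n: ⟨v_i, T v_j⟩ is a nonnegative real number whenever |i−j| = r, and ⟨v_i, T v_j⟩ = 0 whenever |i−j| > r. -/
/-!
Block Lanczos: after `v₁, …, v_r`, let `v_{k+r+1}` be the normalised component of `T v_{k+1}`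
orthogonal to `v₁, …, v_{k+r}` (any unit vector orthogonal to them if that component vanishes).
Then `T v_j` lies in the span of `v₁, …, v_{j+r}`, so `⟪v_i, T v_j⟫ = 0` for `i > j + r`, and
`⟪v_{j+r}, T v_j⟫` is the norm of the orthogonal component, hence a nonnegative real.
Self-adjointness transfers both facts to the entries above the diagonal.
-/

open scoped InnerProductSpace ComplexInnerProductSpace

open Module Submodule

universe u v

variable {𝕜 : Type u} {E : Type v} [RCLike 𝕜]

section NormedSpace

variable [NormedAddCommGroup E] [NormedSpace 𝕜 E]

lemma Submodule.exists_norm_eq_one_and_eq_norm_smul {K : Submodule 𝕜 E} (hK : K ≠ ⊥) {z : E}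
    (hz : z ∈ K) : ∃ u ∈ K, ‖u‖ = 1 ∧ z = (‖z‖ : 𝕜) • u := by
  by_cases h0 : z = 0
  · obtain ⟨y, hyK, hy⟩ := (Submodule.ne_bot_iff K).1 hK
    exact ⟨(‖y‖⁻¹ : 𝕜) • y, K.smul_mem _ hyK, norm_smul_inv_norm hy, by simp [h0]⟩
  · refine ⟨(‖z‖⁻¹ : 𝕜) • z, K.smul_mem _ hz, norm_smul_inv_norm h0, ?_⟩
    rw [smul_smul, mul_inv_cancel₀ (by simpa using h0), one_smul]

end NormedSpace

section InnerProductSpace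

variable [NormedAddCommGroup E] [InnerProductSpace 𝕜 E]

lemma Orthonormal.snoc {m : ℕ} {w : Fin m → E} (hw : Orthonormal 𝕜 w) {u : E} (hu : ‖u‖ = 1)
    (huw : ∀ i, ⟪w i, u⟫_𝕜 = 0) : Orthonormal 𝕜 (Fin.snoc w u : Fin (m + 1) → E) := by
  rw [Fin.snoc_eq_cons_rotate]
  refine (orthonormal_vecCons_iff.2 ⟨hu, fun i => ?_, hw⟩).comp _ (finRotate _).injective
  rw [inner_eq_zero_symm]
  exact huw i

lemma Submodule.exists_mem_orthogonal_norm_eq_one_mem_sup (K : Submodule 𝕜 E)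
    [K.HasOrthogonalProjection] (hK : Kᗮ ≠ ⊥) (x : E) :
    ∃ u ∈ Kᗮ, ‖u‖ = 1 ∧ x ∈ K ⊔ 𝕜 ∙ u ∧ ⟪u, x⟫_𝕜 = (‖x - K.starProjection x‖ : 𝕜) := by
  set z := x - K.starProjection x
  obtain ⟨u, huK, hu, hzu⟩ :=
    exists_norm_eq_one_and_eq_norm_smul hK (K.sub_starProjection_mem_orthogonal x)
  have hx : x = K.starProjection x + (‖z‖ : 𝕜) • u := by rw [← hzu, add_sub_cancel]
  refine ⟨u, huK, hu, ?_, ?_⟩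
  · rw [hx]
    exact add_mem (mem_sup_left (K.starProjection_apply_mem x))
      (mem_sup_right (mem_span_singleton.2 ⟨_, rfl⟩))
  · rw [hx, inner_add_right, inner_smul_right, inner_self_eq_norm_sq_to_K, hu,
      inner_left_of_mem_orthogonal (K.starProjection_apply_mem x) huK]
    simp

variable (𝕜) in
/-- `w 0, …, w (m - 1)` begin an orthonormal basis in which `T` is a band matrix of half-width `r`
with nonnegative real outermost diagonal. Only `w i` for `i < m` matter; indexing by `ℕ` means
that extending the family by one vector does not re-index it. -/
structure IsBandPrefix (T : E → E) (r m : ℕ) (w : ℕ → E) : Prop where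
  orthonormal : Orthonormal 𝕜 fun i : Fin m => w i
  apply_mem_span : ∀ j, j + r < m → T (w j) ∈ span 𝕜 (Set.range fun i : Fin m => w i)
  inner_nonneg : ∀ j, j + r < m → ∃ t : ℝ, 0 ≤ t ∧ ⟪w (j + r), T (w j)⟫_𝕜 = t
  inner_eq_zero : ∀ i j, j + r < i → i < m → ⟪w i, T (w j)⟫_𝕜 = 0

namespace IsBandPrefix

variable {T : E → E} {r k : ℕ} {w : ℕ → E}

lemma exists_update [FiniteDimensional 𝕜 E] (h : IsBandPrefix 𝕜 T r (k + r) w) (hr : 0 < r)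
    (hk : k + r < finrank 𝕜 E) :
    ∃ u, IsBandPrefix 𝕜 T r (k + r + 1) (Function.update w (k + r) u) := by
  set W := span 𝕜 (Set.range fun i : Fin (k + r) => w i)
  have hW : Wᗮ ≠ ⊥ := by
    rw [Ne, orthogonal_eq_bot_iff]
    intro htop
    have : finrank 𝕜 W ≤ k + r := (finrank_range_le_card _).trans_eq (Fintype.card_fin _)
    rw [htop, finrank_top] at this
    omega
  obtain ⟨u, huW, hu, hxu, hux⟩ := W.exists_mem_orthogonal_norm_eq_one_mem_sup hW (T (w k))
  have hupd : ∀ i < k + r, Function.update w (k + r) u i = w i :=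
    fun i hi => Function.update_of_ne hi.ne _ _
  have hsnoc : (fun i : Fin (k + r + 1) => Function.update w (k + r) u i) =
      Fin.snoc (fun i : Fin (k + r) => w i) u := by
    funext i
    induction i using Fin.lastCases with
    | last => simp
    | cast i => simp [hupd i i.2]
  have hspan : span 𝕜 (Set.range fun i : Fin (k + r + 1) => Function.update w (k + r) u i) =
      W ⊔ 𝕜 ∙ u := by
    rw [hsnoc, Fin.range_snoc, span_insert, sup_comm]
  refine ⟨u, ⟨?_, fun j hj => ?_, fun j hj => ?_, fun i j hji hi => ?_⟩⟩
  · rw [hsnoc]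
    exact h.orthonormal.snoc hu fun i =>
      inner_right_of_mem_orthogonal (subset_span (Set.mem_range_self i)) huW
  · rw [hspan, hupd j (by omega)]
    rcases (by omega : j + r < k + r ∨ j = k) with hj | rfl
    · exact mem_sup_left (h.apply_mem_span j hj)
    · exact hxu
  · rw [hupd j (by omega)]
    rcases (by omega : j + r < k + r ∨ j = k) with hj | rfl
    · rw [hupd _ hj]
      exact h.inner_nonneg j hj
    · rw [Function.update_self]
      exact ⟨_, norm_nonneg _, hux⟩
  · rw [hupd j (by omega)]
    rcases (by omega : i < k + r ∨ i = k + r) with hi | rfl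
    · rw [hupd i hi]
      exact h.inner_eq_zero i j hji hi
    · rw [Function.update_self]
      exact inner_left_of_mem_orthogonal (h.apply_mem_span j hji) huW

lemma inner_nonneg_of_abs_sub_eq {T : E →ₗ[𝕜] E} (hT : T.IsSymmetric) {m : ℕ}
    (h : IsBandPrefix 𝕜 T r m w) {i j : ℕ} (hi : i < m) (hj : j < m)
    (hij : |(i : ℤ) - j| = r) : ∃ t : ℝ, 0 ≤ t ∧ ⟪w i, T (w j)⟫_𝕜 = t := by
  rcases abs_eq (Nat.cast_nonneg r) |>.1 hij with hij | hij
  · obtain rfl : i = j + r := by omega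
    exact h.inner_nonneg j hi
  · obtain rfl : j = i + r := by omega
    obtain ⟨t, ht, hinner⟩ := h.inner_nonneg i hj
    exact ⟨t, ht, by rw [← hT, ← inner_conj_symm, hinner, RCLike.conj_ofReal]⟩

lemma inner_eq_zero_of_lt_abs_sub {T : E →ₗ[𝕜] E} (hT : T.IsSymmetric) {m : ℕ}
    (h : IsBandPrefix 𝕜 T r m w) {i j : ℕ} (hi : i < m) (hj : j < m)
    (hij : (r : ℤ) < |(i : ℤ) - j|) : ⟪w i, T (w j)⟫_𝕜 = 0 := by
  rcases lt_abs.1 hij with hij | hij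
  · exact h.inner_eq_zero i j (by omega) hi
  · rw [← hT, ← inner_conj_symm, h.inner_eq_zero j i (by omega) hj, map_zero]

end IsBandPrefix

lemma exists_isBandPrefix [FiniteDimensional 𝕜 E] (T : E → E) {r : ℕ} (hr : 0 < r)
    {v : Fin r → E} (hv : Orthonormal 𝕜 v) {k : ℕ} (hk : k + r ≤ finrank 𝕜 E) :
    ∃ w : ℕ → E, (∀ i : Fin r, w i = v i) ∧ IsBandPrefix 𝕜 T r (k + r) w := by
  induction k with
  | zero =>
    refine ⟨fun i => if h : i < r then v ⟨i, h⟩ else 0, fun i => dif_pos i.2, ?_⟩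
    rw [zero_add]
    refine ⟨?_, fun j hj => by omega, fun j hj => by omega, fun i j hji hi => by omega⟩
    convert hv with i
    exact dif_pos i.2
  | succ k ih =>
    obtain ⟨w, hwv, hw⟩ := ih (by omega)
    obtain ⟨u, hu⟩ := hw.exists_update hr (by omega)
    refine ⟨Function.update w (k + r) u, fun i => ?_, by rwa [Nat.add_right_comm]⟩
    rw [Function.update_of_ne (by omega), hwv]

end InnerProductSpace

/-- **Band Jacobi form, existence (abstract version).**
A self-adjoint operator `T` on an `n`-dimensional complex inner product space admits,
extending any given orthonormal family `v₁, …, v_r` (`1 ≤ r ≤ n`), an ordered orthonormal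
basis in which the matrix of `T` is `(2r+1)`-diagonal with nonnegative outer diagonals. -/
theorem stmt_0 {V : Type*} [NormedAddCommGroup V] [InnerProductSpace ℂ V]
    [FiniteDimensional ℂ V] {n r : ℕ} (hn : Module.finrank ℂ V = n)
    (hr : 1 ≤ r) (hrn : r ≤ n)
    (T : V →ₗ[ℂ] V) (hT : ∀ u w : V, ⟪T u, w⟫ = ⟪u, T w⟫)
    (v : Fin r → V) (hv : Orthonormal ℂ v) :
    ∃ b : OrthonormalBasis (Fin n) ℂ V,
      (∀ i : Fin r, b (Fin.castLE hrn i) = v i) ∧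
      (∀ i j : Fin n, |(i.val : ℤ) - (j.val : ℤ)| = (r : ℤ) →
        ∃ t : ℝ, 0 ≤ t ∧ ⟪b i, T (b j)⟫ = (t : ℂ)) ∧
      (∀ i j : Fin n, (r : ℤ) < |(i.val : ℤ) - (j.val : ℤ)| →
        ⟪b i, T (b j)⟫ = 0) := by
  obtain ⟨w, hwv, hw⟩ := exists_isBandPrefix T hr hv (k := n - r) (by omega)
  rw [Nat.sub_add_cancel hrn] at hw
  have hspan : span ℂ (Set.range fun i : Fin n => w i) = ⊤ :=
    hw.orthonormal.linearIndependent.span_eq_top_of_card_eq_finrank' (by simp [hn])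
  refine ⟨OrthonormalBasis.mk hw.orthonormal hspan.ge, fun i => ?_, fun i j hij => ?_,
    fun i j hij => ?_⟩
  · simpa using hwv i
  · simpa using hw.inner_nonneg_of_abs_sub_eq hT i.2 j.2 hij
  · simpa using hw.inner_eq_zero_of_lt_abs_sub hT i.2 j.2 hij
end

section
/- Let V be a finite-dimensional inner product space over ℂ of dimension n, T : V → V self-adjoint, and v₁,…,v_r orthonormal with 1 ≤ r ≤ n. Suppose v₁,…,v_r,v_{r+1},…,v_n and v₁,…,v_r,v'_{r+1},…,v'_n are two ordered orthonormal bases of V extending v₁,…,v_r such that each basis satisfies: the inner product of the i-th and T applied to the j-th basis vector is a nonnegative real for |i−j| = r, and is 0 for |i−j| > r. If in addition the first basis satisfies ⟨v_i, T v_j⟩ > 0 for all 1 ≤ i,j ≤ n with |i−j| = r, then v'_i = v_i for all r < i ≤ n. -/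
open scoped ComplexInnerProductSpace InnerProductSpace

/-!
Induct on the index `i`. For `i < r` both bases are `v`. For `r ≤ i`, put `j = i - r`; by
induction `b' j = b j`, so `x := T (b j)` is the same vector for both bases. Its coordinates
beyond `i` vanish in either basis (band condition) and its coordinates before `i` agree (the
bases agree there), so `⟪b i, x⟫ • b i = ⟪b' i, x⟫ • b' i`. The coefficients are a positive and
a nonnegative real, and `b i`, `b' i` are unit vectors, hence `b' i = b i`.
-/

open Finset

lemma eq_of_ofReal_smul_eq_of_norm_eq_one {𝕜 E : Type*} [RCLike 𝕜] [NormedAddCommGroup E]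
    [NormedSpace 𝕜 E] {t t' : ℝ} {u u' : E} (ht : 0 < t) (ht' : 0 ≤ t') (hu : ‖u‖ = 1)
    (hu' : ‖u'‖ = 1) (h : (t : 𝕜) • u = (t' : 𝕜) • u') : u = u' := by
  have htt' : t = t' := by
    simpa [norm_smul, hu, hu', abs_of_pos ht, abs_of_nonneg ht'] using congrArg norm h
  subst htt'
  exact smul_right_injective E (RCLike.ofReal_ne_zero.mpr ht.ne') h

namespace OrthonormalBasis

variable {ι 𝕜 E : Type*} [Fintype ι] [LinearOrder ι] [RCLike 𝕜]
  [NormedAddCommGroup E] [InnerProductSpace 𝕜 E]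

lemma inner_smul_eq_inner_smul_of_forall_lt_eq (b b' : OrthonormalBasis ι 𝕜 E) {i : ι}
    (hlt : ∀ k < i, b' k = b k) {x : E} (hb : ∀ k, i < k → ⟪b k, x⟫_𝕜 = 0)
    (hb' : ∀ k, i < k → ⟪b' k, x⟫_𝕜 = 0) :
    ⟪b i, x⟫_𝕜 • b i = ⟪b' i, x⟫_𝕜 • b' i := by
  have herase : ∑ k ∈ univ.erase i, ⟪b k, x⟫_𝕜 • b k
      = ∑ k ∈ univ.erase i, ⟪b' k, x⟫_𝕜 • b' k := by
    refine sum_congr rfl fun k hk => ?_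
    rcases lt_or_gt_of_ne (ne_of_mem_erase hk) with hki | hik
    · rw [hlt k hki]
    · rw [hb k hik, hb' k hik, zero_smul, zero_smul]
  have hsum := ((add_sum_erase univ _ (mem_univ i)).trans (b.sum_repr' x)).trans
    ((add_sum_erase univ _ (mem_univ i)).trans (b'.sum_repr' x)).symm
  rw [herase] at hsum
  exact add_right_cancel hsum

lemma eq_of_forall_lt_eq (b b' : OrthonormalBasis ι 𝕜 E) {i : ι} (hlt : ∀ k < i, b' k = b k)
    {x : E} (hb : ∀ k, i < k → ⟪b k, x⟫_𝕜 = 0) (hb' : ∀ k, i < k → ⟪b' k, x⟫_𝕜 = 0)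
    {t t' : ℝ} (ht : 0 < t) (ht' : 0 ≤ t') (hbi : ⟪b i, x⟫_𝕜 = t) (hbi' : ⟪b' i, x⟫_𝕜 = t') :
    b' i = b i := by
  have h := inner_smul_eq_inner_smul_of_forall_lt_eq b b' hlt hb hb'
  rw [hbi, hbi'] at h
  exact (eq_of_ofReal_smul_eq_of_norm_eq_one ht ht' (b.orthonormal.1 i)
    (b'.orthonormal.1 i) h).symm

end OrthonormalBasis

lemma abs_sub_natSub_eq {i r : ℕ} (h : r ≤ i) : |(i : ℤ) - ((i - r : ℕ) : ℤ)| = r := by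
  rw [Nat.cast_sub h, sub_sub_cancel, abs_of_nonneg (Int.natCast_nonneg r)]

lemma lt_abs_sub_natSub {i k r : ℕ} (h : r ≤ i) (hik : i < k) :
    (r : ℤ) < |(k : ℤ) - ((i - r : ℕ) : ℤ)| := by
  rw [Nat.cast_sub h, abs_of_nonneg (by omega)]
  omega

theorem stmt_1_general {V : Type*} [NormedAddCommGroup V] [InnerProductSpace ℂ V]
    {n r : ℕ}
    (hr : 1 ≤ r) (hrn : r ≤ n)
    (T : V →ₗ[ℂ] V)
    (v : Fin r → V)
    (b b' : OrthonormalBasis (Fin n) ℂ V)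
    (hb_ext : ∀ i : Fin r, b (Fin.castLE hrn i) = v i)
    (hb'_ext : ∀ i : Fin r, b' (Fin.castLE hrn i) = v i)
    (hb_zero : ∀ i j : Fin n, (r : ℤ) < |(i.val : ℤ) - (j.val : ℤ)| →
      ⟪b i, T (b j)⟫ = 0)
    (hb'_outer : ∀ i j : Fin n, |(i.val : ℤ) - (j.val : ℤ)| = (r : ℤ) →
      ∃ t : ℝ, 0 ≤ t ∧ ⟪b' i, T (b' j)⟫ = (t : ℂ))
    (hb'_zero : ∀ i j : Fin n, (r : ℤ) < |(i.val : ℤ) - (j.val : ℤ)| →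
      ⟪b' i, T (b' j)⟫ = 0)
    (hb_pos : ∀ i j : Fin n, |(i.val : ℤ) - (j.val : ℤ)| = (r : ℤ) →
      ∃ t : ℝ, 0 < t ∧ ⟪b i, T (b j)⟫ = (t : ℂ)) :
    ∀ i : Fin n, r ≤ i.val → b' i = b i := by
  suffices h : ∀ i : Fin n, b' i = b i from fun i _ => h i
  intro i
  induction i using WellFoundedLT.induction with
  | ind i IH =>
  by_cases hir : i.val < r
  · simpa using (hb'_ext ⟨i, hir⟩).trans (hb_ext ⟨i, hir⟩).symm
  replace hir := not_lt.mp hir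
  let j : Fin n := ⟨i - r, by omega⟩
  have hbj : b' j = b j := IH j (Nat.sub_lt_self hr hir)
  obtain ⟨t, ht, hbi⟩ := hb_pos i j (abs_sub_natSub_eq hir)
  obtain ⟨t', ht', hbi'⟩ := hb'_outer i j (abs_sub_natSub_eq hir)
  rw [hbj] at hbi'
  refine b.eq_of_forall_lt_eq b' IH (fun k hk => hb_zero k j (lt_abs_sub_natSub hir hk))
    (fun k hk => ?_) ht ht' hbi hbi'
  rw [← hbj]
  exact hb'_zero k j (lt_abs_sub_natSub hir hk)

/-- **Band Jacobi form, uniqueness (abstract version).**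
If two ordered orthonormal bases extending the same orthonormal family `v₁, …, v_r` both put
the self-adjoint operator `T` into `(2r+1)`-diagonal form with nonnegative outer diagonals,
and the first one has strictly positive outer diagonals, then the two bases agree in all the
extension vectors (indices `> r`). -/
theorem stmt_1 {V : Type*} [NormedAddCommGroup V] [InnerProductSpace ℂ V]
    [FiniteDimensional ℂ V] {n r : ℕ} (hn : Module.finrank ℂ V = n)
    (hr : 1 ≤ r) (hrn : r ≤ n)
    (T : V →ₗ[ℂ] V) (hT : ∀ u w : V, ⟪T u, w⟫ = ⟪u, T w⟫)
    (v : Fin r → V) (hv : Orthonormal ℂ v)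
    (b b' : OrthonormalBasis (Fin n) ℂ V)
    (hb_ext : ∀ i : Fin r, b (Fin.castLE hrn i) = v i)
    (hb'_ext : ∀ i : Fin r, b' (Fin.castLE hrn i) = v i)
    (hb_outer : ∀ i j : Fin n, |(i.val : ℤ) - (j.val : ℤ)| = (r : ℤ) →
      ∃ t : ℝ, 0 ≤ t ∧ ⟪b i, T (b j)⟫ = (t : ℂ))
    (hb_zero : ∀ i j : Fin n, (r : ℤ) < |(i.val : ℤ) - (j.val : ℤ)| →
      ⟪b i, T (b j)⟫ = 0)
    (hb'_outer : ∀ i j : Fin n, |(i.val : ℤ) - (j.val : ℤ)| = (r : ℤ) →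
      ∃ t : ℝ, 0 ≤ t ∧ ⟪b' i, T (b' j)⟫ = (t : ℂ))
    (hb'_zero : ∀ i j : Fin n, (r : ℤ) < |(i.val : ℤ) - (j.val : ℤ)| →
      ⟪b' i, T (b' j)⟫ = 0)
    (hb_pos : ∀ i j : Fin n, |(i.val : ℤ) - (j.val : ℤ)| = (r : ℤ) →
      ∃ t : ℝ, 0 < t ∧ ⟪b i, T (b j)⟫ = (t : ℂ)) :
    ∀ i : Fin n, r ≤ i.val → b' i = b i :=
  stmt_1_general hr hrn T v b b' hb_ext hb'_ext hb_zero hb'_outer hb'_zero hb_pos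
end

section
/- Let A be an n×n Hermitian matrix over ℂ and let 1 ≤ r ≤ n. Then there exists a unitary matrix U ∈ U(n) of block-diagonal form U = I_r ⊕ Ũ with Ũ ∈ U(n−r), such that B = U A U† satisfies: B_{ij} is a nonnegative real number for all 1 ≤ i,j ≤ n with |i−j| = r, and B_{ij} = 0 for all 1 ≤ i,j ≤ n with |i−j| > r. -/
/-!
Sweep the columns from left to right. Suppose columns `0, …, k-1` of the Hermitian matrix
`B = U A Uᴴ` already satisfy the band conditions. Extend `e_0, …, e_{k+r-1}` and the normalised
part of column `k` in rows `≥ k + r` to an orthonormal basis; its conjugated rows form a unitary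
`V = I_{k+r} ⊕ Ṽ` sending that part to a nonnegative multiple of `e_{k+r}`. Since `r ≥ 1`,
`Vᴴ` fixes `e_k`, so column `k` of `V B Vᴴ` is `V` applied to column `k` of `B`, which is in band
form; columns `j < k` are supported in rows `≤ j + r < k + r`, which `V` fixes, so they do not
change; the entries above the diagonal follow from Hermitian symmetry.
-/

open Matrix

namespace EuclideanSpace

variable {𝕜 : Type*} [RCLike 𝕜] {n : ℕ}

theorem exists_orthonormalBasis_single_of_lt {m : ℕ} (hm : m < n)
    {u : EuclideanSpace 𝕜 (Fin n)} (hu : ‖u‖ = 1) (hu0 : ∀ j : Fin n, j.val < m → u j = 0) :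
    ∃ b : OrthonormalBasis (Fin n) 𝕜 (EuclideanSpace 𝕜 (Fin n)),
      (∀ i : Fin n, i.val < m → b i = single i 1) ∧ b ⟨m, hm⟩ = u := by
  classical
  let f : Fin n → EuclideanSpace 𝕜 (Fin n) := fun i => if i.val < m then single i 1 else u
  have hf : Orthonormal 𝕜 ({i : Fin n | i.val ≤ m}.domRestrict f) := by
    rw [orthonormal_iff_ite]
    rintro ⟨i, hi⟩ ⟨j, hj⟩
    simp only [Set.mem_ofPred_eq] at hi hj
    simp only [Set.domRestrict_apply, Subtype.mk.injEq, f]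
    rcases lt_or_eq_of_le hi with hi | hi <;> rcases lt_or_eq_of_le hj with hj | hj
    · simp [hi, hj, EuclideanSpace.inner_single_left, PiLp.single_apply]
    · have : i ≠ j := by omega
      simp [hi, hj.not_lt, EuclideanSpace.inner_single_left, hu0 i hi, this]
    · have : i ≠ j := by omega
      rw [if_neg hi.not_lt, if_pos hj, if_neg this, ← inner_conj_symm]
      simp [EuclideanSpace.inner_single_left, hu0 j hj]
    · simp [hj.not_lt, inner_self_eq_norm_sq_to_K, hu, Fin.ext (hi.trans hj.symm)]
  obtain ⟨b, hb⟩ := hf.exists_orthonormalBasis_extension_of_card_eq (by simp)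
  refine ⟨b, fun i hi => ?_, ?_⟩
  · rw [hb i (by simp only [Set.mem_ofPred_eq]; omega)]
    simp [f, hi]
  · rw [hb _ (by simp)]
    simp [f]

end EuclideanSpace

namespace Matrix

variable {𝕜 : Type*} [RCLike 𝕜] {n r : ℕ}

/-- `U = I_m ⊕ Ũ`. -/
def IsBlockIdentity (m : ℕ) (U : Matrix (Fin n) (Fin n) 𝕜) : Prop :=
  ∀ i j : Fin n, i.val < m ∨ j.val < m → U i j = if i = j then 1 else 0

namespace IsBlockIdentity

variable {m : ℕ} {U V : Matrix (Fin n) (Fin n) 𝕜}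

theorem one : IsBlockIdentity m (1 : Matrix (Fin n) (Fin n) 𝕜) :=
  fun _ _ _ => one_apply

theorem mono {m' : ℕ} (hU : IsBlockIdentity m U) (h : m' ≤ m) : IsBlockIdentity m' U :=
  fun i j hij => hU i j (by omega)

theorem mulVec_apply_of_lt (hU : IsBlockIdentity m U) (w : Fin n → 𝕜) {i : Fin n}
    (hi : i.val < m) : (U *ᵥ w) i = w i := by
  simp [mulVec, dotProduct, hU i _ (Or.inl hi)]

theorem mulVec_eq_self (hU : IsBlockIdentity m U) {w : Fin n → 𝕜}
    (hw : ∀ i : Fin n, m ≤ i.val → w i = 0) : U *ᵥ w = w := by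
  ext i
  calc (U *ᵥ w) i = ∑ a, U i a * w a := rfl
    _ = ∑ a, (if i = a then 1 else 0) * w a := Finset.sum_congr rfl fun a _ => by
          rcases lt_or_ge a.val m with ha | ha
          · rw [hU i a (Or.inr ha)]
          · simp [hw a ha]
    _ = w i := by simp

theorem mul (hU : IsBlockIdentity m U) (hV : IsBlockIdentity m V) :
    IsBlockIdentity m (U * V) := by
  rintro i j (hi | hj)
  · simp [mul_apply, hU i _ (Or.inl hi), hV i j (Or.inl hi)]
  · simp [mul_apply, hV _ j (Or.inr hj), hU i j (Or.inr hj)]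

theorem mul_mul_conjTranspose_apply (hU : IsBlockIdentity m U) (B : Matrix (Fin n) (Fin n) 𝕜)
    (i : Fin n) {j : Fin n} (hj : j.val < m) : (U * B * Uᴴ) i j = (U *ᵥ fun a => B a j) i := by
  simp [mul_apply, hU j _ (Or.inl hj), mulVec, dotProduct]

end IsBlockIdentity

end Matrix

namespace OrthonormalBasis

variable {𝕜 : Type*} [RCLike 𝕜]

theorem conjTranspose_toMatrix_mulVec_apply {ι : Type*} [Fintype ι] [DecidableEq ι]
    (b : OrthonormalBasis ι 𝕜 (EuclideanSpace 𝕜 ι)) (x : EuclideanSpace 𝕜 ι) (i : ι) :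
    (((EuclideanSpace.basisFun ι 𝕜).toBasis.toMatrix b)ᴴ *ᵥ x) i = inner 𝕜 (b i) x := by
  simp [mulVec, dotProduct, PiLp.inner_apply, Module.Basis.toMatrix_apply, mul_comm]

theorem isBlockIdentity_conjTranspose_toMatrix {n m : ℕ}
    {b : OrthonormalBasis (Fin n) 𝕜 (EuclideanSpace 𝕜 (Fin n))}
    (hb : ∀ i : Fin n, i.val < m → b i = EuclideanSpace.single i 1) :
    IsBlockIdentity m ((EuclideanSpace.basisFun (Fin n) 𝕜).toBasis.toMatrix b)ᴴ := by
  rintro i j (hi | hj)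
  · simp [Module.Basis.toMatrix_apply, hb i hi, PiLp.single_apply, eq_comm]
  · rw [← orthonormal_iff_ite.mp b.orthonormal, hb j hj, EuclideanSpace.inner_single_right]
    simp [Module.Basis.toMatrix_apply]

end OrthonormalBasis

namespace Matrix

variable {𝕜 : Type*} [RCLike 𝕜] {n r : ℕ}

theorem exists_unitary_isBlockIdentity_mulVec_tail (m : ℕ) (w : Fin n → 𝕜) :
    ∃ V ∈ unitaryGroup (Fin n) 𝕜, IsBlockIdentity m V ∧ ∃ t : ℝ, 0 ≤ t ∧
      ∀ i : Fin n, m ≤ i.val → (V *ᵥ w) i = if i.val = m then (t : 𝕜) else 0 := by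
  classical
  let head : Fin n → 𝕜 := fun j => if m ≤ j.val then 0 else w j
  let tail : EuclideanSpace 𝕜 (Fin n) := WithLp.toLp 2 fun j => if m ≤ j.val then w j else 0
  have hw : w = head + tail := by
    ext j; by_cases hj : m ≤ j.val <;> simp [head, tail, hj]
  by_cases htail : tail = 0
  · refine ⟨1, one_mem _, IsBlockIdentity.one, 0, le_rfl, fun i hi => ?_⟩
    have : w i = tail i := by simp [tail, hi]
    rw [one_mulVec, this, htail]
    simp
  have hmn : m < n := by
    by_contra! hnm
    exact htail (by ext j; simp only [PiLp.zero_apply, ite_eq_right_iff, tail]; omega)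
  let u : EuclideanSpace 𝕜 (Fin n) := (‖tail‖⁻¹ : 𝕜) • tail
  have hu : ‖u‖ = 1 := by
    simp [u, norm_smul, htail]
  have hu0 : ∀ j : Fin n, j.val < m → u j = 0 := fun j hj => by
    simp [u, tail, Nat.not_le.mpr hj]
  obtain ⟨b, hb, hbm⟩ := EuclideanSpace.exists_orthonormalBasis_single_of_lt hmn hu hu0
  let V : Matrix (Fin n) (Fin n) 𝕜 := ((EuclideanSpace.basisFun (Fin n) 𝕜).toBasis.toMatrix b)ᴴ
  have hVblock : IsBlockIdentity m V := b.isBlockIdentity_conjTranspose_toMatrix hb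
  refine ⟨V, ?_, hVblock, ‖tail‖, norm_nonneg _, fun i hi => ?_⟩
  · exact Unitary.star_mem (OrthonormalBasis.toMatrix_orthonormalBasis_mem_unitary _ _)
  have htail_u : tail = (‖tail‖ : 𝕜) • b ⟨m, hmn⟩ := by
    rw [hbm, smul_smul, mul_inv_cancel₀ (by simpa using htail), one_smul]
  have hVtail : (V *ᵥ tail) i = if i = ⟨m, hmn⟩ then (‖tail‖ : 𝕜) else 0 := by
    conv_lhs => rw [b.conjTranspose_toMatrix_mulVec_apply, htail_u]
    rw [inner_smul_right, orthonormal_iff_ite.mp b.orthonormal, mul_ite, mul_one, mul_zero]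
  rw [hw, mulVec_add, hVblock.mulVec_eq_self (fun j hj => by simp [head, hj]), Pi.add_apply,
    hVtail]
  simp [head, hi, Fin.ext_iff]

def IsBandJacobiEntry (r : ℕ) (d : ℤ) (z : 𝕜) : Prop :=
  (|d| = r → ∃ t : ℝ, 0 ≤ t ∧ z = t) ∧ (r < |d| → z = 0)

theorem isBandJacobiEntry_of_abs_lt {d : ℤ} (hd : |d| < r) (z : 𝕜) : IsBandJacobiEntry r d z :=
  ⟨fun h => by omega, fun h => by omega⟩

theorem IsBandJacobiEntry.neg_star {d : ℤ} {z : 𝕜} (h : IsBandJacobiEntry r d z) :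
    IsBandJacobiEntry r (-d) (star z) := by
  refine ⟨fun hd => ?_, fun hd => ?_⟩
  · obtain ⟨t, ht, rfl⟩ := h.1 (by rwa [abs_neg] at hd)
    exact ⟨t, ht, by simp⟩
  · rw [h.2 (by rwa [abs_neg] at hd), star_zero]

theorem exists_unitary_isBlockIdentity_bandJacobi_cols_succ (hr : 1 ≤ r)
    {B : Matrix (Fin n) (Fin n) 𝕜} (hB : B.IsHermitian) (κ : Fin n)
    (hcols : ∀ i j : Fin n, j < κ → IsBandJacobiEntry r (i.val - j.val : ℤ) (B i j)) :
    ∃ V ∈ unitaryGroup (Fin n) 𝕜, IsBlockIdentity (κ.val + r) V ∧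
      ∀ i j : Fin n, j ≤ κ → IsBandJacobiEntry r (i.val - j.val : ℤ) ((V * B * Vᴴ) i j) := by
  obtain ⟨V, hV, hVblock, t, ht, hVcol⟩ :=
    exists_unitary_isBlockIdentity_mulVec_tail (κ.val + r) fun a => B a κ
  refine ⟨V, hV, hVblock, fun i j hj => ?_⟩
  have hj' : j.val < κ.val + r := by rw [Fin.le_def] at hj; omega
  rw [hVblock.mul_mul_conjTranspose_apply B i hj']
  rcases hj.lt_or_eq with hj | rfl
  · have hsupp : ∀ a : Fin n, κ.val + r ≤ a.val → B a j = 0 := fun a ha =>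
      (hcols a j hj).2 (by rw [Fin.lt_def] at hj; rw [abs_of_nonneg] <;> omega)
    rw [hVblock.mulVec_eq_self hsupp]
    exact hcols i j hj
  rcases lt_or_ge i j with hi | hi
  · rw [hVblock.mulVec_apply_of_lt _ (by rw [Fin.lt_def] at hi; omega), ← hB.apply, ← neg_sub]
    exact (hcols j i hi).neg_star
  have habs : |(i.val - j.val : ℤ)| = i.val - j.val :=
    abs_of_nonneg (by rw [Fin.le_def] at hi; omega)
  rcases lt_or_ge i.val (j.val + r) with hir | hir
  · exact isBandJacobiEntry_of_abs_lt (by omega) _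
  rw [IsBandJacobiEntry, habs, hVcol i hir]
  exact ⟨fun hd => ⟨t, ht, if_pos (by omega)⟩, fun hd => if_neg (by omega)⟩

theorem exists_unitary_isBlockIdentity_bandJacobi_cols (hr : 1 ≤ r)
    {A : Matrix (Fin n) (Fin n) 𝕜} (hA : A.IsHermitian) (k : ℕ) :
    ∃ U ∈ unitaryGroup (Fin n) 𝕜, IsBlockIdentity r U ∧
      ∀ i j : Fin n, j.val < k → IsBandJacobiEntry r (i.val - j.val : ℤ) ((U * A * Uᴴ) i j) := by
  induction k with
  | zero => exact ⟨1, one_mem _, IsBlockIdentity.one, fun _ _ h => absurd h (Nat.not_lt_zero _)⟩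
  | succ k ih =>
    obtain ⟨U, hU, hUblock, hUcols⟩ := ih
    by_cases hk : k < n
    swap
    · exact ⟨U, hU, hUblock, fun i j _ => hUcols i j (by omega)⟩
    obtain ⟨V, hV, hVblock, hVcols⟩ := exists_unitary_isBlockIdentity_bandJacobi_cols_succ hr
      (isHermitian_mul_mul_conjTranspose U hA) ⟨k, hk⟩ hUcols
    refine ⟨V * U, mul_mem hV hU, (hVblock.mono (Nat.le_add_left _ _)).mul hUblock,
      fun i j hj => ?_⟩
    have hconj : V * U * A * (V * U)ᴴ = V * (U * A * Uᴴ) * Vᴴ := by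
      simp only [conjTranspose_mul, Matrix.mul_assoc]
    rw [hconj]
    exact hVcols i j (Nat.lt_succ_iff.mp hj)

def IsBandJacobiForm (r : ℕ) (B : Matrix (Fin n) (Fin n) 𝕜) : Prop :=
  ∀ i j : Fin n, IsBandJacobiEntry r (i.val - j.val : ℤ) (B i j)

theorem exists_unitary_isBlockIdentity_isBandJacobiForm (hr : 1 ≤ r)
    {A : Matrix (Fin n) (Fin n) 𝕜} (hA : A.IsHermitian) :
    ∃ U ∈ unitaryGroup (Fin n) 𝕜, IsBlockIdentity r U ∧ IsBandJacobiForm r (U * A * Uᴴ) :=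
  let ⟨U, hU, hUblock, hUcols⟩ := exists_unitary_isBlockIdentity_bandJacobi_cols hr hA n
  ⟨U, hU, hUblock, fun i j => hUcols i j j.isLt⟩

end Matrix

theorem stmt_2_general {n r : ℕ} (hr : 1 ≤ r)
    (A : Matrix (Fin n) (Fin n) ℂ) (hA : A.IsHermitian) :
    ∃ U ∈ Matrix.unitaryGroup (Fin n) ℂ,
      (∀ i j : Fin n, i.val < r → U i j = if i = j then 1 else 0) ∧
      (∀ i j : Fin n, j.val < r → U i j = if i = j then 1 else 0) ∧
      (∀ i j : Fin n, |(i.val : ℤ) - (j.val : ℤ)| = (r : ℤ) →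
        ∃ t : ℝ, 0 ≤ t ∧ (U * A * Uᴴ) i j = (t : ℂ)) ∧
      (∀ i j : Fin n, (r : ℤ) < |(i.val : ℤ) - (j.val : ℤ)| →
        (U * A * Uᴴ) i j = 0) := by
  obtain ⟨U, hU, hUblock, hUband⟩ := exists_unitary_isBlockIdentity_isBandJacobiForm hr hA
  exact ⟨U, hU, fun i j hi => hUblock i j (Or.inl hi), fun i j hj => hUblock i j (Or.inr hj),
    fun i j h => (hUband i j).1 h, fun i j h => (hUband i j).2 h⟩

/-- **Band Jacobi form of a Hermitian matrix, existence.**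
For an `n × n` Hermitian matrix `A` and `1 ≤ r ≤ n` there is a unitary `U` of block form
`I_r ⊕ Ũ` (i.e. rows and columns with index `< r` are those of the identity) such that
`B = U A Uᴴ` has nonnegative real entries on the `r`-th off-diagonals (`|i - j| = r`) and
vanishing entries beyond them (`|i - j| > r`). -/
theorem stmt_2 {n r : ℕ} (hr : 1 ≤ r) (hrn : r ≤ n)
    (A : Matrix (Fin n) (Fin n) ℂ) (hA : A.IsHermitian) :
    ∃ U ∈ Matrix.unitaryGroup (Fin n) ℂ,
      (∀ i j : Fin n, i.val < r → U i j = if i = j then 1 else 0) ∧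
      (∀ i j : Fin n, j.val < r → U i j = if i = j then 1 else 0) ∧
      (∀ i j : Fin n, |(i.val : ℤ) - (j.val : ℤ)| = (r : ℤ) →
        ∃ t : ℝ, 0 ≤ t ∧ (U * A * Uᴴ) i j = (t : ℂ)) ∧
      (∀ i j : Fin n, (r : ℤ) < |(i.val : ℤ) - (j.val : ℤ)| →
        (U * A * Uᴴ) i j = 0) :=
  stmt_2_general hr A hA
end

section
/- Let A be an n×n Hermitian matrix over ℂ and 1 ≤ r ≤ n. Suppose U = I_r ⊕ Ũ and U' = I_r ⊕ Ũ' are two unitary matrices of the stated block form such that both B = U A U† and B' = U' A U'† satisfy: entries at positions with |i−j| = r are nonnegative reals and entries at positions with |i−j| > r vanish. If in addition B_{ij} > 0 for all i,j with |i−j| = r, then U = U' (and hence B = B'). -/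
/-!
Put `W = U' Uᴴ`. It is unitary, fixes `e₀, …, e_{r-1}`, and intertwines the band forms
`B = U A Uᴴ` and `B' = U' A U'ᴴ`: `W B = B' W`. By induction on `j`, column `j` of `W` is `e_j`.
Once the earlier columns are standard, orthogonality kills the entries of column `j` above the
diagonal, and comparing the `(i, j - r)` entries of `W B = B' W` leaves only
`W i j * B j (j-r) = B' i (j-r)`. For `i > j` the right side is zero by the band condition on `B'`,
so `W i j = 0` as `B j (j-r) > 0`; for `i = j` it makes `W j j` a nonnegative real of modulus one,
i.e. `1`.
-/

open Matrix
open scoped ComplexOrder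

theorem RCLike.eq_one_of_star_mul_self_of_mul_pos_eq_nonneg {𝕜 : Type*} [RCLike 𝕜]
    {z b b' : 𝕜} (hz : star z * z = 1) (hb : 0 < b) (hb' : 0 ≤ b') (h : z * b = b') :
    z = 1 := by
  obtain ⟨t, ht, rfl⟩ := RCLike.pos_iff_exists_ofReal.mp hb
  obtain ⟨t', ht', rfl⟩ := RCLike.nonneg_iff_exists_ofReal.mp hb'
  have hzt : z = ((t' / t : ℝ) : 𝕜) := by
    rw [RCLike.ofReal_div, eq_div_iff (by exact_mod_cast ht.ne'), h]
  rw [hzt, RCLike.star_def, RCLike.conj_ofReal, ← RCLike.ofReal_mul] at hz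
  have hs : t' / t * (t' / t) = 1 := by exact_mod_cast hz
  have hs_nonneg : 0 ≤ t' / t := div_nonneg ht' ht.le
  rw [hzt, show t' / t = 1 by nlinarith, RCLike.ofReal_one]

namespace Matrix

section Orthonormal

variable {ι 𝕜 : Type*} [Fintype ι] [DecidableEq ι] [RCLike 𝕜] {W : Matrix ι ι 𝕜}

theorem apply_eq_zero_of_col_eq_one_col (hW : Wᴴ * W = 1) {j k : ι}
    (hk : W.col k = (1 : Matrix ι ι 𝕜).col k) (hkj : k ≠ j) : W k j = 0 := by
  have h := congrFun (congrFun hW k) j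
  rw [mul_apply, one_apply_ne hkj] at h
  have hk' (i : ι) : W i k = (1 : Matrix ι ι 𝕜) i k := congrFun hk i
  simpa [conjTranspose_apply, hk', one_apply] using h

theorem star_mul_self_diag_eq_one (hW : Wᴴ * W = 1) {j : ι} (hj : ∀ i, i ≠ j → W i j = 0) :
    star (W j j) * W j j = 1 := by
  have h := congrFun (congrFun hW j) j
  rwa [mul_apply, Finset.sum_eq_single j (fun i _ hi => by rw [hj i hi, mul_zero])
    (by simp), one_apply_eq, conjTranspose_apply] at h

end Orthonormal

section LowerBand

variable {𝕜 : Type*} [RCLike 𝕜] {n r : ℕ} {W B B' : Matrix (Fin n) (Fin n) 𝕜}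

theorem mul_apply_eq_of_lowerBand (hWB : W * B = B' * W)
    (hB_zero : ∀ k l : Fin n, l.val + r < k.val → B k l = 0) {i j m : Fin n}
    (hcols : ∀ k < j, W.col k = (1 : Matrix (Fin n) (Fin n) 𝕜).col k)
    (hm : m.val + r = j.val) (hmj : m < j) (hji : j ≤ i) :
    W i j * B j m = B' i m := by
  have h := congrFun (congrFun hWB i) m
  have hWm (k : Fin n) : W k m = (1 : Matrix (Fin n) (Fin n) 𝕜) k m := congrFun (hcols m hmj) k
  rwa [mul_apply, mul_apply, Finset.sum_eq_single j ?_ (by simp),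
    Finset.sum_eq_single m (fun k _ hk => by rw [hWm, one_apply_ne hk, mul_zero]) (by simp),
    hWm, one_apply_eq, mul_one] at h
  intro k _ hkj
  rcases lt_or_gt_of_ne hkj with hkj | hkj
  · have hWik : W i k = (1 : Matrix (Fin n) (Fin n) 𝕜) i k := congrFun (hcols k hkj) i
    rw [hWik, one_apply_ne (hkj.trans_le hji).ne', zero_mul]
  · rw [hB_zero k m (by rw [hm]; exact hkj), mul_zero]

theorem col_eq_one_col_of_lowerBand (hr : 0 < r) (hW : Wᴴ * W = 1) (hWB : W * B = B' * W)
    (hB_pos : ∀ k l : Fin n, k.val = l.val + r → 0 < B k l)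
    (hB_zero : ∀ k l : Fin n, l.val + r < k.val → B k l = 0)
    (hB'_nonneg : ∀ k l : Fin n, k.val = l.val + r → 0 ≤ B' k l)
    (hB'_zero : ∀ k l : Fin n, l.val + r < k.val → B' k l = 0)
    {j : Fin n} (hrj : r ≤ j.val)
    (hcols : ∀ k < j, W.col k = (1 : Matrix (Fin n) (Fin n) 𝕜).col k) :
    W.col j = (1 : Matrix (Fin n) (Fin n) 𝕜).col j := by
  set m : Fin n := ⟨j.val - r, by omega⟩
  have hm : m.val + r = j.val := by simp only [m]; omega
  have hmj : m < j := Fin.lt_def.mpr (by simp only [m]; omega)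
  have hB_jm : 0 < B j m := hB_pos j m hm.symm
  have h_above (k : Fin n) (hk : k < j) : W k j = 0 :=
    apply_eq_zero_of_col_eq_one_col hW (hcols k hk) hk.ne
  have h_below (i : Fin n) (hi : j < i) : W i j = 0 := by
    have h := mul_apply_eq_of_lowerBand hWB hB_zero hcols hm hmj hi.le
    rw [hB'_zero i m (by rw [hm]; exact hi)] at h
    exact (mul_eq_zero.mp h).resolve_right hB_jm.ne'
  have h_off (i : Fin n) (hi : i ≠ j) : W i j = 0 :=
    (lt_or_gt_of_ne hi).elim (h_above i) (h_below i)
  have h_diag : W j j = 1 :=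
    RCLike.eq_one_of_star_mul_self_of_mul_pos_eq_nonneg (star_mul_self_diag_eq_one hW h_off)
      hB_jm (hB'_nonneg j m hm.symm) (mul_apply_eq_of_lowerBand hWB hB_zero hcols hm hmj le_rfl)
  ext i
  rcases eq_or_ne i j with rfl | hi
  · simp [h_diag]
  · simp [h_off i hi, one_apply_ne hi]

theorem eq_one_of_lowerBand (hr : 0 < r) (hW : Wᴴ * W = 1) (hWB : W * B = B' * W)
    (hW_col : ∀ j : Fin n, j.val < r → W.col j = (1 : Matrix (Fin n) (Fin n) 𝕜).col j)
    (hB_pos : ∀ k l : Fin n, k.val = l.val + r → 0 < B k l)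
    (hB_zero : ∀ k l : Fin n, l.val + r < k.val → B k l = 0)
    (hB'_nonneg : ∀ k l : Fin n, k.val = l.val + r → 0 ≤ B' k l)
    (hB'_zero : ∀ k l : Fin n, l.val + r < k.val → B' k l = 0) :
    W = 1 := by
  have hcols (j : Fin n) : W.col j = (1 : Matrix (Fin n) (Fin n) 𝕜).col j := by
    induction j using WellFoundedLT.induction with
    | _ j ih =>
      by_cases hj : j.val < r
      · exact hW_col j hj
      · exact col_eq_one_col_of_lowerBand hr hW hWB hB_pos hB_zero hB'_nonneg hB'_zero
          (not_lt.mp hj) ih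
  ext i j
  exact congrFun (hcols j) i

end LowerBand

section Conjugation

variable {ι α : Type*} [Fintype ι] [DecidableEq ι]

theorem mul_conjTranspose_mul_conj_eq [Semiring α] [Star α] {U U' : Matrix ι ι α}
    (hU : Uᴴ * U = 1) (hU' : U'ᴴ * U' = 1) (A : Matrix ι ι α) :
    U' * Uᴴ * (U * A * Uᴴ) = U' * A * U'ᴴ * (U' * Uᴴ) := by
  calc U' * Uᴴ * (U * A * Uᴴ) = U' * (Uᴴ * U) * A * Uᴴ := by simp only [Matrix.mul_assoc]
    _ = U' * A * (U'ᴴ * U') * Uᴴ := by rw [hU, hU', Matrix.mul_one, Matrix.mul_one]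
    _ = U' * A * U'ᴴ * (U' * Uᴴ) := by simp only [Matrix.mul_assoc]

theorem mul_conjTranspose_col_eq_one_col [Semiring α] [StarRing α] {U U' : Matrix ι ι α}
    {j : ι}
    (hU : U j = (1 : Matrix ι ι α) j) (hU' : U'.col j = (1 : Matrix ι ι α).col j) :
    (U' * Uᴴ).col j = (1 : Matrix ι ι α).col j := by
  ext i
  have hU'_apply (k : ι) : U' k j = (1 : Matrix ι ι α) k j := congrFun hU' k
  simp [mul_apply, conjTranspose_apply, hU, one_apply, apply_ite star, hU'_apply]

end Conjugation

end Matrix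

theorem stmt_3_general {n r : ℕ} (hr : 1 ≤ r)
    (A : Matrix (Fin n) (Fin n) ℂ)
    (U U' : Matrix (Fin n) (Fin n) ℂ)
    (hU : U ∈ Matrix.unitaryGroup (Fin n) ℂ)
    (hU' : U' ∈ Matrix.unitaryGroup (Fin n) ℂ)
    (hU_row : ∀ i j : Fin n, i.val < r → U i j = if i = j then 1 else 0)
    (hU'_col : ∀ i j : Fin n, j.val < r → U' i j = if i = j then 1 else 0)
    (hB_zero : ∀ i j : Fin n, (r : ℤ) < |(i.val : ℤ) - (j.val : ℤ)| →
      (U * A * Uᴴ) i j = 0)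
    (hB'_outer : ∀ i j : Fin n, |(i.val : ℤ) - (j.val : ℤ)| = (r : ℤ) →
      ∃ t : ℝ, 0 ≤ t ∧ (U' * A * U'ᴴ) i j = (t : ℂ))
    (hB'_zero : ∀ i j : Fin n, (r : ℤ) < |(i.val : ℤ) - (j.val : ℤ)| →
      (U' * A * U'ᴴ) i j = 0)
    (hB_pos : ∀ i j : Fin n, |(i.val : ℤ) - (j.val : ℤ)| = (r : ℤ) →
      ∃ t : ℝ, 0 < t ∧ (U * A * Uᴴ) i j = (t : ℂ)) :
    U = U' ∧ U * A * Uᴴ = U' * A * U'ᴴ := by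
  have hUU : Uᴴ * U = 1 := by
    simpa [star_eq_conjTranspose] using mem_unitaryGroup_iff'.mp hU
  have hU'U' : U'ᴴ * U' = 1 := by
    simpa [star_eq_conjTranspose] using mem_unitaryGroup_iff'.mp hU'
  have hW : (U' * Uᴴ)ᴴ * (U' * Uᴴ) = 1 := by
    simpa [star_eq_conjTranspose] using
      mem_unitaryGroup_iff'.mp (mul_mem hU' (Unitary.star_mem hU))
  have h_outer {k l : Fin n} (h : k.val = l.val + r) : |(k.val : ℤ) - l.val| = r := by
    rw [h]; push_cast; simp
  have h_far {k l : Fin n} (h : l.val + r < k.val) : (r : ℤ) < |(k.val : ℤ) - l.val| := by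
    rw [abs_of_nonneg (by omega)]; omega
  have hW_one : U' * Uᴴ = 1 := by
    refine Matrix.eq_one_of_lowerBand hr hW (mul_conjTranspose_mul_conj_eq hUU hU'U' A)
      (fun j hj => mul_conjTranspose_col_eq_one_col ?_ ?_)
      (fun k l h => ?_) (fun k l h => hB_zero k l (h_far h))
      (fun k l h => ?_) (fun k l h => hB'_zero k l (h_far h))
    · funext k; simpa [one_apply] using hU_row j k hj
    · funext i; simpa [one_apply] using hU'_col i j hj
    · obtain ⟨t, ht, h⟩ := hB_pos k l (h_outer h)
      exact h ▸ Complex.zero_lt_real.mpr ht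
    · obtain ⟨t, ht, h⟩ := hB'_outer k l (h_outer h)
      exact h ▸ Complex.zero_le_real.mpr ht
  have hUU' : U = U' := by
    simpa [Matrix.mul_assoc, hUU] using (congrArg (· * U) hW_one).symm
  exact ⟨hUU', by rw [hUU']⟩

/-- **Band Jacobi form of a Hermitian matrix, uniqueness.**
If two unitaries `U, U'` of block form `I_r ⊕ Ũ` both conjugate the Hermitian matrix `A`
into `(2r+1)`-diagonal band form with nonnegative `r`-th off-diagonals, and the band form
`B = U A Uᴴ` has strictly positive `r`-th off-diagonals, then `U = U'`. -/
theorem stmt_3 {n r : ℕ} (hr : 1 ≤ r) (hrn : r ≤ n)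
    (A : Matrix (Fin n) (Fin n) ℂ) (hA : A.IsHermitian)
    (U U' : Matrix (Fin n) (Fin n) ℂ)
    (hU : U ∈ Matrix.unitaryGroup (Fin n) ℂ)
    (hU' : U' ∈ Matrix.unitaryGroup (Fin n) ℂ)
    (hU_row : ∀ i j : Fin n, i.val < r → U i j = if i = j then 1 else 0)
    (hU_col : ∀ i j : Fin n, j.val < r → U i j = if i = j then 1 else 0)
    (hU'_row : ∀ i j : Fin n, i.val < r → U' i j = if i = j then 1 else 0)
    (hU'_col : ∀ i j : Fin n, j.val < r → U' i j = if i = j then 1 else 0)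
    (hB_outer : ∀ i j : Fin n, |(i.val : ℤ) - (j.val : ℤ)| = (r : ℤ) →
      ∃ t : ℝ, 0 ≤ t ∧ (U * A * Uᴴ) i j = (t : ℂ))
    (hB_zero : ∀ i j : Fin n, (r : ℤ) < |(i.val : ℤ) - (j.val : ℤ)| →
      (U * A * Uᴴ) i j = 0)
    (hB'_outer : ∀ i j : Fin n, |(i.val : ℤ) - (j.val : ℤ)| = (r : ℤ) →
      ∃ t : ℝ, 0 ≤ t ∧ (U' * A * U'ᴴ) i j = (t : ℂ))
    (hB'_zero : ∀ i j : Fin n, (r : ℤ) < |(i.val : ℤ) - (j.val : ℤ)| →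
      (U' * A * U'ᴴ) i j = 0)
    (hB_pos : ∀ i j : Fin n, |(i.val : ℤ) - (j.val : ℤ)| = (r : ℤ) →
      ∃ t : ℝ, 0 < t ∧ (U * A * Uᴴ) i j = (t : ℂ)) :
    U = U' ∧ U * A * Uᴴ = U' * A * U'ᴴ :=
  stmt_3_general hr A U U' hU hU' hU_row hU'_col hB_zero hB'_outer hB'_zero hB_pos
end

section
/- Let V be a finite-dimensional inner product space over ℂ of dimension n, T : V → V self-adjoint, and v₁,…,v_r orthonormal with 1 ≤ r ≤ n. Define the Krylov sequence u₁, u₂, … by u_{qr+i} = T^q v_i for q ≥ 0 and 1 ≤ i ≤ r (so the sequence is v₁,…,v_r, Tv₁,…,Tv_r, T²v₁,…). If the first n vectors u₁,…,u_n are linearly independent, then the Gram–Schmidt orthonormalization e₁,…,e_n of u₁,…,u_n is an orthonormal basis of V with e_i = v_i for 1 ≤ i ≤ r, and it satisfies ⟨e_i, T e_j⟩ = 0 for |i−j| > r and ⟨e_i, T e_j⟩ is a strictly positive real for |i−j| = r. -/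
/-!
`T` shifts the Krylov sequence by `r` places, so it maps `span {u_k | k < N}` into
`span {u_k | k < N + r}`. Gram–Schmidt makes `e_i` orthogonal to `span {u_k | k < i}` while
`e_j ∈ span {u_k | k ≤ j}`, hence `⟪e_i, T e_j⟫ = 0` once `j + r < i`, and self-adjointness
gives the mirror case. For `i = j + r`, write `‖g_j‖ e_j = u_j - w` with `w ∈ span {u_k | k < j}`:
then `‖g_j‖ T e_j = u_i - T w` with `T w ∈ span {u_k | k < i}`, so
`⟪e_i, T e_j⟫ = ⟪e_i, u_i⟫ / ‖g_j‖ = ‖g_i‖ / ‖g_j‖ > 0`, where `g` is the unnormalized output.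
-/

open scoped ComplexInnerProductSpace

/-- Shortcut instance (worksaround a typeclass-resolution issue for `Fin n`). -/
instance (n : ℕ) : WellFoundedLT (Fin n) := inferInstance

open Submodule InnerProductSpace
open scoped InnerProductSpace

namespace InnerProductSpace

section GramSchmidt

variable {𝕜 E ι : Type*} [RCLike 𝕜] [NormedAddCommGroup E] [InnerProductSpace 𝕜 E]
  [LinearOrder ι] [LocallyFiniteOrderBot ι] [WellFoundedLT ι]

theorem sub_gramSchmidt_mem_span_Iio (f : ι → E) (i : ι) :
    f i - gramSchmidt 𝕜 f i ∈ span 𝕜 (f '' Set.Iio i) := by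
  rw [gramSchmidt_def 𝕜 f i, sub_sub_cancel, ← span_gramSchmidt_Iio]
  refine sum_mem fun k hk => ?_
  refine span_mono ?_ (starProjection_apply_mem (𝕜 ∙ gramSchmidt 𝕜 f k) (f i))
  exact Set.singleton_subset_iff.2 ⟨k, Finset.mem_Iio.1 hk, rfl⟩

theorem inner_gramSchmidtNormed_eq_zero_of_mem_span_Iio (f : ι → E) {i : ι} {x : E}
    (hx : x ∈ span 𝕜 (f '' Set.Iio i)) : ⟪gramSchmidtNormed 𝕜 f i, x⟫_𝕜 = 0 := by
  have hspan : span 𝕜 (f '' Set.Iio i) ≤ (𝕜 ∙ gramSchmidt 𝕜 f i)ᗮ := by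
    rw [span_le]
    rintro _ ⟨k, hk, rfl⟩
    exact mem_orthogonal_singleton_iff_inner_right.2 (gramSchmidt_inv_triangular 𝕜 f hk)
  rw [gramSchmidtNormed, inner_smul_left, mem_orthogonal_singleton_iff_inner_right.1 (hspan hx),
    mul_zero]

theorem inner_gramSchmidtNormed_self (f : ι → E) (i : ι) :
    ⟪gramSchmidtNormed 𝕜 f i, f i⟫_𝕜 = (‖gramSchmidt 𝕜 f i‖ : 𝕜) := by
  have hperp := inner_gramSchmidtNormed_eq_zero_of_mem_span_Iio (𝕜 := 𝕜) f
    (sub_gramSchmidt_mem_span_Iio f i)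
  rw [inner_sub_right, sub_eq_zero] at hperp
  rw [hperp, gramSchmidtNormed, inner_smul_left, inner_self_eq_norm_sq_to_K, RCLike.conj_inv,
    RCLike.conj_ofReal]
  by_cases h : gramSchmidt 𝕜 f i = 0
  · simp [h]
  · field_simp

theorem gramSchmidt_eq_self_of_orthogonal_Iic {f : ι → E} {i : ι}
    (horth : ∀ j k, j < k → k ≤ i → ⟪f j, f k⟫_𝕜 = 0) : gramSchmidt 𝕜 f i = f i := by
  induction i using WellFoundedLT.induction with
  | ind i ih =>
    rw [gramSchmidt_def, sub_eq_self]
    refine Finset.sum_eq_zero fun k hk => ?_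
    have hki := Finset.mem_Iio.1 hk
    rw [starProjection_singleton, ih k hki fun j l hjl hlk => horth j l hjl (hlk.trans hki.le),
      horth k i hki le_rfl, zero_div, zero_smul]

theorem gramSchmidtNormed_eq_self_of_orthonormal_Iic {f : ι → E} {i : ι}
    (horth : ∀ j k, j < k → k ≤ i → ⟪f j, f k⟫_𝕜 = 0) (hnorm : ‖f i‖ = 1) :
    gramSchmidtNormed 𝕜 f i = f i := by
  rw [gramSchmidtNormed, gramSchmidt_eq_self_of_orthogonal_Iic horth, hnorm]
  simp

theorem gramSchmidtNormed_castLE_of_orthonormal {n r : ℕ} (hrn : r ≤ n) {f : Fin n → E}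
    {v : Fin r → E} (hv : Orthonormal 𝕜 v) (hf : ∀ (k : Fin n) (hk : (k : ℕ) < r), f k = v ⟨k, hk⟩)
    (i : Fin r) : gramSchmidtNormed 𝕜 f (Fin.castLE hrn i) = v i := by
  have hi : (Fin.castLE hrn i : ℕ) < r := i.isLt
  refine (gramSchmidtNormed_eq_self_of_orthonormal_Iic (fun j k hjk hki => ?_) ?_).trans (hf _ hi)
  · rw [hf j (by omega), hf k (by omega)]
    exact hv.2 (Fin.ne_of_lt hjk)
  · rw [hf _ hi]
    exact hv.1 i

end GramSchmidt

end InnerProductSpace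

section Krylov

variable {R M : Type*} [Semiring R] [AddCommMonoid M] [Module R M] {r : ℕ}

def krylovSeq (T : M →ₗ[R] M) (v : Fin r → M) (hr : 0 < r) (k : ℕ) : M :=
  (T ^ (k / r)) (v ⟨k % r, Nat.mod_lt _ hr⟩)

theorem krylovSeq_add_self (T : M →ₗ[R] M) (v : Fin r → M) (hr : 0 < r) (k : ℕ) :
    krylovSeq T v hr (k + r) = T (krylovSeq T v hr k) := by
  simp only [krylovSeq, Nat.add_div_right _ hr, Nat.add_mod_right, pow_succ', Module.End.mul_apply]

theorem krylovSeq_of_lt (T : M →ₗ[R] M) (v : Fin r → M) (hr : 0 < r) {k : ℕ} (hk : k < r) :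
    krylovSeq T v hr k = v ⟨k, hk⟩ := by
  simp only [krylovSeq, Nat.div_eq_of_lt hk, Nat.mod_eq_of_lt hk, pow_zero, Module.End.one_apply]

end Krylov

section BandStructure

variable {𝕜 E : Type*} [RCLike 𝕜] [NormedAddCommGroup E] [InnerProductSpace 𝕜 E] {n r : ℕ}
  {f : Fin n → E} {T : E →ₗ[𝕜] E}

theorem map_span_image_lt_le
    (hshift : ∀ (k : Fin n) (hk : (k : ℕ) + r < n), T (f k) = f ⟨k + r, hk⟩)
    {N : ℕ} (hN : N + r ≤ n) :
    (span 𝕜 (f '' {k | (k : ℕ) < N})).map T ≤ span 𝕜 (f '' {k | (k : ℕ) < N + r}) := by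
  rw [map_span_le]
  rintro _ ⟨k, hk, rfl⟩
  have hkr : (k : ℕ) + r < n := by have : (k : ℕ) < N := hk; omega
  rw [hshift k hkr]
  exact subset_span ⟨_, by simpa using hk, rfl⟩

theorem inner_gramSchmidtNormed_map_eq_zero_of_add_lt
    (hshift : ∀ (k : Fin n) (hk : (k : ℕ) + r < n), T (f k) = f ⟨k + r, hk⟩) {i j : Fin n}
    (hij : (j : ℕ) + r < i) : ⟪gramSchmidtNormed 𝕜 f i, T (gramSchmidtNormed 𝕜 f j)⟫_𝕜 = 0 := by
  have hj : gramSchmidtNormed 𝕜 f j ∈ span 𝕜 (f '' {k | (k : ℕ) < j + 1}) :=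
    span_mono (Set.image_mono fun k (hk : k ≤ j) => Nat.lt_succ_of_le hk)
      (smul_mem _ _ (gramSchmidt_mem_span 𝕜 f le_rfl))
  refine inner_gramSchmidtNormed_eq_zero_of_mem_span_Iio f (span_mono (Set.image_mono ?_)
    (map_span_image_lt_le hshift (by omega) (mem_map_of_mem hj)))
  intro k (hk : (k : ℕ) < j + 1 + r)
  show (k : ℕ) < i
  omega

theorem inner_gramSchmidtNormed_map_of_add_eq
    (hshift : ∀ (k : Fin n) (hk : (k : ℕ) + r < n), T (f k) = f ⟨k + r, hk⟩) {i j : Fin n}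
    (hij : (j : ℕ) + r = i) : ⟪gramSchmidtNormed 𝕜 f i, T (gramSchmidtNormed 𝕜 f j)⟫_𝕜 =
      ((‖gramSchmidt 𝕜 f i‖ / ‖gramSchmidt 𝕜 f j‖ : ℝ) : 𝕜) := by
  have hTf : T (f j) = f i := by
    rw [hshift j (hij ▸ i.isLt)]
    exact congrArg f (Fin.ext hij)
  have hperp : ⟪gramSchmidtNormed 𝕜 f i, T (f j - gramSchmidt 𝕜 f j)⟫_𝕜 = 0 := by
    refine inner_gramSchmidtNormed_eq_zero_of_mem_span_Iio f ?_
    have := map_span_image_lt_le hshift (hij ▸ i.isLt.le)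
      (mem_map_of_mem (sub_gramSchmidt_mem_span_Iio (𝕜 := 𝕜) f j))
    rwa [hij] at this
  calc ⟪gramSchmidtNormed 𝕜 f i, T (gramSchmidtNormed 𝕜 f j)⟫_𝕜
      = (‖gramSchmidt 𝕜 f j‖ : 𝕜)⁻¹ * (⟪gramSchmidtNormed 𝕜 f i, T (f j)⟫_𝕜 -
          ⟪gramSchmidtNormed 𝕜 f i, T (f j - gramSchmidt 𝕜 f j)⟫_𝕜) := by
        rw [gramSchmidtNormed.eq_1 𝕜 f j, map_smul, inner_smul_right, map_sub, inner_sub_right,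
          sub_sub_cancel]
    _ = ((‖gramSchmidt 𝕜 f i‖ / ‖gramSchmidt 𝕜 f j‖ : ℝ) : 𝕜) := by
        rw [hTf, hperp, inner_gramSchmidtNormed_self, sub_zero]
        push_cast
        ring

theorem inner_gramSchmidtNormed_map_eq_zero (hT : T.IsSymmetric)
    (hshift : ∀ (k : Fin n) (hk : (k : ℕ) + r < n), T (f k) = f ⟨k + r, hk⟩) {i j : Fin n}
    (hij : (r : ℤ) < |(i : ℤ) - j|) :
    ⟪gramSchmidtNormed 𝕜 f i, T (gramSchmidtNormed 𝕜 f j)⟫_𝕜 = 0 := by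
  rcases lt_abs.1 hij with h | h
  · exact inner_gramSchmidtNormed_map_eq_zero_of_add_lt hshift (by omega)
  · rw [← hT, ← inner_conj_symm, inner_gramSchmidtNormed_map_eq_zero_of_add_lt hshift (by omega),
      map_zero]

theorem exists_pos_inner_gramSchmidtNormed_map (hT : T.IsSymmetric)
    (hshift : ∀ (k : Fin n) (hk : (k : ℕ) + r < n), T (f k) = f ⟨k + r, hk⟩)
    (hf : LinearIndependent 𝕜 f) {i j : Fin n} (hij : |(i : ℤ) - j| = r) :
    ∃ t : ℝ, 0 < t ∧ ⟪gramSchmidtNormed 𝕜 f i, T (gramSchmidtNormed 𝕜 f j)⟫_𝕜 = t := by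
  have hpos : ∀ k : Fin n, 0 < ‖gramSchmidt 𝕜 f k‖ :=
    fun k => norm_pos_iff.2 (gramSchmidt_ne_zero k hf)
  rcases (abs_eq (Int.natCast_nonneg r)).1 hij with h | h
  · exact ⟨_, div_pos (hpos i) (hpos j), inner_gramSchmidtNormed_map_of_add_eq hshift (by omega)⟩
  · refine ⟨_, div_pos (hpos j) (hpos i), ?_⟩
    rw [← hT, ← inner_conj_symm, inner_gramSchmidtNormed_map_of_add_eq hshift (by omega),
      RCLike.conj_ofReal]

end BandStructure

/-- **The band Jacobi basis via the Krylov sequence and Gram–Schmidt.**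
Let `T` be self-adjoint on an `n`-dimensional complex inner product space, let
`v₁, …, v_r` be orthonormal (`1 ≤ r ≤ n`), and let `u` be the Krylov sequence
`u_{qr+i} = T^q v_i`.  If the first `n` Krylov vectors are linearly independent, then their
Gram–Schmidt orthonormalization `e` is an orthonormal basis of `V` extending `v₁, …, v_r`,
and in this basis `T` is `(2r+1)`-diagonal with strictly positive outer diagonals. -/
theorem stmt_4 {V : Type*} [NormedAddCommGroup V] [InnerProductSpace ℂ V]
    [FiniteDimensional ℂ V] {n r : ℕ} (hn : Module.finrank ℂ V = n)
    (hr : 1 ≤ r) (hrn : r ≤ n)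
    (T : V →ₗ[ℂ] V) (hT : ∀ u w : V, ⟪T u, w⟫ = ⟪u, T w⟫)
    (v : Fin r → V) (hv : Orthonormal ℂ v)
    (u : Fin n → V)
    (hu : ∀ k : Fin n, u k = (T ^ (k.val / r)) (v ⟨k.val % r, Nat.mod_lt _ hr⟩))
    (hind : LinearIndependent ℂ u) :
    Orthonormal ℂ (InnerProductSpace.gramSchmidtNormed ℂ u) ∧
    Submodule.span ℂ (Set.range (InnerProductSpace.gramSchmidtNormed ℂ u)) = ⊤ ∧
    (∀ i : Fin r, InnerProductSpace.gramSchmidtNormed ℂ u (Fin.castLE hrn i) = v i) ∧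
    (∀ i j : Fin n, (r : ℤ) < |(i.val : ℤ) - (j.val : ℤ)| →
      ⟪InnerProductSpace.gramSchmidtNormed ℂ u i, T (InnerProductSpace.gramSchmidtNormed ℂ u j)⟫ = 0) ∧
    (∀ i j : Fin n, |(i.val : ℤ) - (j.val : ℤ)| = (r : ℤ) →
      ∃ t : ℝ, 0 < t ∧ ⟪InnerProductSpace.gramSchmidtNormed ℂ u i, T (InnerProductSpace.gramSchmidtNormed ℂ u j)⟫ = (t : ℂ)) := by
  have hu' : ∀ k : Fin n, u k = krylovSeq T v hr k := hu
  have hshift (k : Fin n) (hk : (k : ℕ) + r < n) : T (u k) = u ⟨k + r, hk⟩ := by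
    rw [hu', hu', krylovSeq_add_self]
  refine ⟨gramSchmidtNormed_orthonormal hind, ?_,
    gramSchmidtNormed_castLE_of_orthonormal hrn hv fun k hk =>
      (hu' k).trans (krylovSeq_of_lt T v hr hk),
    fun i j => inner_gramSchmidtNormed_map_eq_zero hT hshift,
    fun i j => exists_pos_inner_gramSchmidtNormed_map hT hshift hind⟩
  rw [span_gramSchmidtNormed_range, span_gramSchmidt,
    hind.span_eq_top_of_card_eq_finrank' (by simp [hn])]
end

section
/- Let r ≥ 1, let Y : [0,∞) → M_r(ℂ) be continuous, let W ∈ M_r(ℂ), and let Λ ∈ ℂ. Then the set of continuously differentiable functions f : [0,∞) → ℂ^r satisfying f'(x) = W f(0) + Y(x) f(x) − ∫₀ˣ Y(t) f'(t) dt − Λ ∫₀ˣ f(t) dt for all x ≥ 0 is a complex vector subspace of dimension at most r. (Consequently, each eigenspace of the half-line operator is at most r-dimensional.) -/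
/-!
Put `v x = ∫₀ˣ Y f' + Λ ∫₀ˣ f`. A solution with `f 0 = 0` satisfies `f' = Y f − v` and
`v' = Y f' + Λ f`, so the pair `(f, v)` solves a linear first-order system whose coefficients are
bounded on every `[0, x]`, with zero initial value; Grönwall's inequality forces `f = 0`. The
equation is linear in `f`, so the solutions form a subspace on which `f ↦ f 0` is injective, and
its dimension is at most `dim ℂ^r = r`.
-/

open MeasureTheory Set intervalIntegral

section

variable {F : Type*} [NormedAddCommGroup F] [NormedSpace ℝ F]

theorem eq_zero_of_hasDerivWithinAt_of_norm_le {u u' : ℝ → F} {K a b : ℝ}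
    (hu : ContinuousOn u (Icc a b)) (hu' : ∀ t ∈ Ico a b, HasDerivWithinAt u (u' t) (Ici t) t)
    (ha : u a = 0) (bound : ∀ t ∈ Ico a b, ‖u' t‖ ≤ K * ‖u t‖) :
    ∀ t ∈ Icc a b, u t = 0 := fun t ht => by
  simpa [gronwallBound_ε0_δ0] using norm_le_gronwallBound_of_norm_deriv_right_le (δ := 0) (ε := 0)
    hu hu' (by simp [ha]) (fun s hs => by simpa using bound s hs) t ht

theorem ContinuousOn.hasDerivWithinAt_integral_Ici [CompleteSpace F] {h : ℝ → F} {a t : ℝ}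
    (hh : ContinuousOn h (Ici a)) (ht : a ≤ t) :
    HasDerivWithinAt (fun x => ∫ s in a..x, h s) (h t) (Ici t) t := by
  have hsub : Ici t ⊆ Ici a := Ici_subset_Ici.mpr ht
  refine integral_hasDerivWithinAt_right (t := Ioi t)
    ((hh.mono Icc_subset_Ici_self).intervalIntegrable_of_Icc ht)
    ⟨Ici t, Filter.mem_of_superset self_mem_nhdsWithin Ioi_subset_Ici_self,
      (hh.mono hsub).aestronglyMeasurable measurableSet_Ici⟩
    (((hh t ht).mono hsub).mono Ioi_subset_Ici_self)

end

-- Linear growth of the right-hand side of the system `(f, v)' = (f', Y f' + Λ f)`, `f' = Y f − v`.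
theorem norm_prod_le_of_eq_sub {E : Type*} [NormedAddCommGroup E] [NormedSpace ℂ E]
    {A : E →L[ℂ] E} {C : ℝ} (hA : ‖A‖ ≤ C) (Λ : ℂ) {f v g : E} (hg : g = A f - v) :
    ‖(g, A g + Λ • f)‖ ≤ ((C + 1) * (C + 1) + ‖Λ‖) * ‖(f, v)‖ := by
  have hC : 0 ≤ C := (norm_nonneg A).trans hA
  have hf : ‖f‖ ≤ ‖(f, v)‖ := _root_.norm_fst_le (f, v)
  have hv : ‖v‖ ≤ ‖(f, v)‖ := _root_.norm_snd_le (f, v)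
  have hgn : ‖g‖ ≤ (C + 1) * ‖(f, v)‖ := calc
    ‖g‖ ≤ ‖A f‖ + ‖v‖ := hg ▸ norm_sub_le _ _
    _ ≤ C * ‖f‖ + ‖v‖ := by gcongr; exact A.le_of_opNorm_le hA f
    _ ≤ (C + 1) * ‖(f, v)‖ := by nlinarith
  have hAg : ‖A g + Λ • f‖ ≤ (C * (C + 1) + ‖Λ‖) * ‖(f, v)‖ := calc
    ‖A g + Λ • f‖ ≤ C * ‖g‖ + ‖Λ‖ * ‖f‖ :=
      (norm_add_le _ _).trans (add_le_add (A.le_of_opNorm_le hA g) (norm_smul Λ f).le)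
    _ ≤ (C * (C + 1) + ‖Λ‖) * ‖(f, v)‖ := by
      nlinarith [mul_le_mul_of_nonneg_left hgn hC, mul_le_mul_of_nonneg_left hf (norm_nonneg Λ)]
  rw [Prod.norm_def]
  refine max_le (hgn.trans ?_) (hAg.trans ?_) <;>
    exact mul_le_mul_of_nonneg_right (by nlinarith [norm_nonneg Λ]) (norm_nonneg _)

theorem ContinuousOn.toContinuousLinearMap_mulVecLin {X 𝕜 m n : Type*} [TopologicalSpace X]
    [NontriviallyNormedField 𝕜] [CompleteSpace 𝕜] [Fintype m] [Fintype n] [DecidableEq n]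
    {M : X → Matrix m n 𝕜} {s : Set X} (hM : ContinuousOn M s) :
    ContinuousOn (fun x => (M x).mulVecLin.toContinuousLinearMap) s :=
  (LinearMap.continuous_of_finiteDimensional
    (Matrix.toLin'.trans LinearMap.toContinuousLinearMap : Matrix m n 𝕜 ≃ₗ[𝕜] _).toLinearMap
    ).comp_continuousOn hM

variable {E : Type*} [NormedAddCommGroup E] [NormedSpace ℂ E]

structure IsIntegratedEigenfunction (Y : ℝ → E →L[ℂ] E) (W : E →ₗ[ℂ] E) (Λ : ℂ) (f : ℝ → E) :
    Prop where
  eq_zero_of_neg : ∀ x : ℝ, x < 0 → f x = 0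
  contDiffOn : ContDiffOn ℝ 1 f (Ici 0)
  derivWithin_eq : ∀ x : ℝ, 0 ≤ x → derivWithin f (Ici 0) x =
    W (f 0) + Y x (f x) - (∫ t in (0:ℝ)..x, Y t (derivWithin f (Ici 0) t))
      - Λ • (∫ t in (0:ℝ)..x, f t)

namespace IsIntegratedEigenfunction

variable {Y : ℝ → E →L[ℂ] E} {W : E →ₗ[ℂ] E} {Λ : ℂ} {f g : ℝ → E}

theorem zero : IsIntegratedEigenfunction Y W Λ 0 :=
  ⟨fun _ _ => rfl, contDiffOn_const, fun x _ => by simp⟩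

theorem continuousOn_derivWithin (hf : IsIntegratedEigenfunction Y W Λ f) :
    ContinuousOn (derivWithin f (Ici 0)) (Ici 0) :=
  hf.contDiffOn.continuousOn_derivWithin (uniqueDiffOn_Ici 0) le_rfl

theorem derivWithin_add (hf : IsIntegratedEigenfunction Y W Λ f)
    (hg : IsIntegratedEigenfunction Y W Λ g) {t : ℝ} (ht : 0 ≤ t) :
    derivWithin (f + g) (Ici 0) t = derivWithin f (Ici 0) t + derivWithin g (Ici 0) t :=
  _root_.derivWithin_add (hf.contDiffOn.differentiableOn one_ne_zero t ht)
    (hg.contDiffOn.differentiableOn one_ne_zero t ht)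

theorem add (hY : ContinuousOn Y (Ici 0)) (hf : IsIntegratedEigenfunction Y W Λ f)
    (hg : IsIntegratedEigenfunction Y W Λ g) : IsIntegratedEigenfunction Y W Λ (f + g) := by
  refine ⟨fun x hx => by simp [hf.eq_zero_of_neg x hx, hg.eq_zero_of_neg x hx],
    hf.contDiffOn.add hg.contDiffOn, fun x hx => ?_⟩
  have hint : ∀ {h : ℝ → E}, ContinuousOn h (Ici 0) → IntervalIntegrable h volume 0 x :=
    fun hh => (hh.mono Icc_subset_Ici_self).intervalIntegrable_of_Icc hx
  have hYd : (∫ t in (0:ℝ)..x, Y t (derivWithin (f + g) (Ici 0) t)) =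
      (∫ t in (0:ℝ)..x, Y t (derivWithin f (Ici 0) t)) +
        ∫ t in (0:ℝ)..x, Y t (derivWithin g (Ici 0) t) := by
    rw [← integral_add (hint (hY.clm_apply hf.continuousOn_derivWithin))
      (hint (hY.clm_apply hg.continuousOn_derivWithin))]
    refine integral_congr fun t ht => ?_
    rw [uIcc_of_le hx] at ht
    simp only [hf.derivWithin_add hg ht.1, map_add]
  rw [hf.derivWithin_add hg hx, hf.derivWithin_eq x hx, hg.derivWithin_eq x hx, hYd]
  simp only [Pi.add_apply, map_add]
  rw [integral_add (hint hf.contDiffOn.continuousOn) (hint hg.contDiffOn.continuousOn), smul_add]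
  abel

theorem smul (c : ℂ) (hf : IsIntegratedEigenfunction Y W Λ f) :
    IsIntegratedEigenfunction Y W Λ (c • f) := by
  have hd : ∀ t, 0 ≤ t → derivWithin (c • f) (Ici 0) t = c • derivWithin f (Ici 0) t :=
    fun t ht => derivWithin_const_smul c (hf.contDiffOn.differentiableOn one_ne_zero t ht)
  refine ⟨fun x hx => by simp [hf.eq_zero_of_neg x hx], hf.contDiffOn.const_smul c,
    fun x hx => ?_⟩
  have hYd : (∫ t in (0:ℝ)..x, Y t (derivWithin (c • f) (Ici 0) t)) =
      c • ∫ t in (0:ℝ)..x, Y t (derivWithin f (Ici 0) t) := by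
    rw [← intervalIntegral.integral_smul]
    refine integral_congr fun t ht => ?_
    rw [uIcc_of_le hx] at ht
    simp only [hd t ht.1, map_smul]
  rw [hd x hx, hf.derivWithin_eq x hx, hYd]
  simp only [Pi.smul_apply, map_smul, intervalIntegral.integral_smul, smul_sub, smul_add,
    smul_comm c Λ]

variable [CompleteSpace E] in
theorem eq_zero_of_apply_zero (hY : ContinuousOn Y (Ici 0))
    (hf : IsIntegratedEigenfunction Y W Λ f) (h0 : f 0 = 0) : f = 0 := by
  set g := derivWithin f (Ici 0)
  have hfc : ContinuousOn f (Ici 0) := hf.contDiffOn.continuousOn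
  have hgc : ContinuousOn g (Ici 0) := hf.continuousOn_derivWithin
  set v : ℝ → E := fun x => (∫ t in (0:ℝ)..x, Y t (g t)) + Λ • ∫ t in (0:ℝ)..x, f t
  have hgv : ∀ x, 0 ≤ x → g x = Y x (f x) - v x := fun x hx =>
    (hf.derivWithin_eq x hx).trans <| by rw [h0, map_zero, zero_add, sub_sub]
  -- `v` is a primitive, but its continuity is read off more cheaply from the equation itself
  have hvc : ContinuousOn v (Ici 0) :=
    ((hY.clm_apply hfc).sub hgc).congr fun x hx => by rw [Pi.sub_apply, hgv x hx, sub_sub_cancel]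
  have hf' : ∀ t, 0 ≤ t → HasDerivWithinAt f (g t) (Ici t) t := fun t ht =>
    (hf.contDiffOn.differentiableOn one_ne_zero t ht).hasDerivWithinAt.mono
      (Ici_subset_Ici.mpr ht)
  have hv' : ∀ t, 0 ≤ t → HasDerivWithinAt v (Y t (g t) + Λ • f t) (Ici t) t := fun t ht =>
    ((hY.clm_apply hgc).hasDerivWithinAt_integral_Ici ht).add
      ((hfc.hasDerivWithinAt_integral_Ici ht).const_smul Λ)
  funext x
  rcases lt_or_ge x 0 with hx | hx
  · exact hf.eq_zero_of_neg x hx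
  obtain ⟨C, hC⟩ := isCompact_Icc.exists_bound_of_continuousOn
    (hY.mono (Icc_subset_Ici_self : Icc 0 x ⊆ Ici 0))
  have hu := eq_zero_of_hasDerivWithinAt_of_norm_le (u := fun t => (f t, v t))
    ((hfc.prodMk hvc).mono Icc_subset_Ici_self) (fun t ht => (hf' t ht.1).prodMk (hv' t ht.1))
    (by simp [v, h0]) (fun t ht => norm_prod_le_of_eq_sub (hC t (Ico_subset_Icc_self ht)) Λ
      (hgv t ht.1)) x ⟨hx, le_rfl⟩
  simpa using congrArg Prod.fst hu

end IsIntegratedEigenfunction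

def integratedEigenspace {Y : ℝ → E →L[ℂ] E} (hY : ContinuousOn Y (Ici 0)) (W : E →ₗ[ℂ] E)
    (Λ : ℂ) : Submodule ℂ (ℝ → E) where
  carrier := {f | IsIntegratedEigenfunction Y W Λ f}
  add_mem' hf hg := hf.add hY hg
  zero_mem' := .zero
  smul_mem' c _ hf := hf.smul c

theorem rank_integratedEigenspace_le [CompleteSpace E] {Y : ℝ → E →L[ℂ] E}
    (hY : ContinuousOn Y (Ici 0)) (W : E →ₗ[ℂ] E) (Λ : ℂ) :
    Module.rank ℂ (integratedEigenspace hY W Λ) ≤ Module.rank ℂ E := by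
  refine ((LinearMap.proj 0).comp (integratedEigenspace hY W Λ).subtype).rank_le_of_injective ?_
  rw [injective_iff_map_eq_zero]
  exact fun f hf0 => Subtype.ext (f.2.eq_zero_of_apply_zero hY hf0)

theorem stmt_7_general {r : ℕ}
    (Y : ℝ → Matrix (Fin r) (Fin r) ℂ)
    (hY : ∀ i j : Fin r, ContinuousOn (fun x => Y x i j) (Set.Ici 0))
    (W : Matrix (Fin r) (Fin r) ℂ) (Λ : ℂ) :
    ∃ S : Submodule ℂ (ℝ → (Fin r → ℂ)),
      (S : Set (ℝ → (Fin r → ℂ))) =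
        {f | (∀ x : ℝ, x < 0 → f x = 0) ∧ ContDiffOn ℝ 1 f (Set.Ici 0) ∧
          ∀ x : ℝ, 0 ≤ x → derivWithin f (Set.Ici 0) x =
            W.mulVec (f 0) + (Y x).mulVec (f x)
              - (∫ t in (0:ℝ)..x, (Y t).mulVec (derivWithin f (Set.Ici 0) t))
              - Λ • (∫ t in (0:ℝ)..x, f t)} ∧
      Module.rank ℂ S ≤ r := by
  have hY' := (continuousOn_pi.2 fun i => continuousOn_pi.2 (hY i) :
    ContinuousOn Y (Ici 0)).toContinuousLinearMap_mulVecLin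
  refine ⟨integratedEigenspace hY' W.mulVecLin Λ,
    Set.ext fun f => ⟨fun ⟨h₁, h₂, h₃⟩ => ⟨h₁, h₂, h₃⟩, fun ⟨h₁, h₂, h₃⟩ => ⟨h₁, h₂, h₃⟩⟩, ?_⟩
  simpa using rank_integratedEigenspace_le hY' W.mulVecLin Λ

/-- **Eigenspaces are at most `r`-dimensional (Lemma 3.7 / `l.one`).**
Functions on `[0,∞)` are modelled as functions on `ℝ` vanishing on `(-∞,0)`.  The set of
(continuously differentiable on `[0,∞)`) solutions of the integrated eigenvalue equation
`f'(x) = W f(0) + Y(x) f(x) − ∫₀ˣ Y f' − Λ ∫₀ˣ f` is a complex subspace of dimension at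
most `r`. -/
theorem stmt_7 {r : ℕ} (hr : 1 ≤ r)
    (Y : ℝ → Matrix (Fin r) (Fin r) ℂ)
    (hY : ∀ i j : Fin r, ContinuousOn (fun x => Y x i j) (Set.Ici 0))
    (W : Matrix (Fin r) (Fin r) ℂ) (Λ : ℂ) :
    ∃ S : Submodule ℂ (ℝ → (Fin r → ℂ)),
      (S : Set (ℝ → (Fin r → ℂ))) =
        {f | (∀ x : ℝ, x < 0 → f x = 0) ∧ ContDiffOn ℝ 1 f (Set.Ici 0) ∧
          ∀ x : ℝ, 0 ≤ x → derivWithin f (Set.Ici 0) x =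
            W.mulVec (f 0) + (Y x).mulVec (f x)
              - (∫ t in (0:ℝ)..x, (Y t).mulVec (derivWithin f (Set.Ici 0) t))
              - Λ • (∫ t in (0:ℝ)..x, f t)} ∧
      Module.rank ℂ S ≤ r :=
  stmt_7_general Y hY W Λ
end

section
/- Let r ≥ 1, m > 0, and let v : ℕ → ℂ^r have finite support. Define ‖v‖² = m^{-1} Σ_{j≥0} |v_j|² and ‖Dv‖² = m^{-1} Σ_{j≥0} |m(v_{j+1} − v_j)|², where |·| is the Euclidean norm on ℂ^r. Then |v_0|² ≤ 2·‖Dv‖·‖v‖. -/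
/-!
Telescoping, `‖v₀‖² = Σ_{j<N} (‖v_j‖² − ‖v_{j+1}‖²)` where `v_N = 0`, and each term is at most
`‖v_{j+1} − v_j‖ (‖v_j‖ + ‖v_{j+1}‖)`. Cauchy–Schwarz bounds the two resulting sums by
`√A √B` each, where `A = Σ ‖v_{j+1} − v_j‖²` and `B = Σ ‖v_j‖²` (the shifted sum of squares is at
most `B`). The weights `m⁻¹` and `m` cancel in the product of the two norms.
-/

open Finset

section Telescoping

variable {E : Type*} [SeminormedAddCommGroup E]

lemma norm_sq_sub_norm_sq_le (x y : E) : ‖x‖ ^ 2 - ‖y‖ ^ 2 ≤ ‖y - x‖ * (‖x‖ + ‖y‖) := by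
  have h : ‖x‖ - ‖y‖ ≤ ‖y - x‖ := by
    simpa only [norm_sub_rev] using norm_sub_norm_le x y
  calc ‖x‖ ^ 2 - ‖y‖ ^ 2 = (‖x‖ - ‖y‖) * (‖x‖ + ‖y‖) := by ring
    _ ≤ ‖y - x‖ * (‖x‖ + ‖y‖) := by gcongr

lemma sum_range_norm_succ_sq_le {u : ℕ → E} {N : ℕ} (hN : u N = 0) :
    ∑ j ∈ range N, ‖u (j + 1)‖ ^ 2 ≤ ∑ j ∈ range N, ‖u j‖ ^ 2 := by
  have h := sum_range_succ' (fun j => ‖u j‖ ^ 2) N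
  rw [sum_range_succ, hN, norm_zero] at h
  nlinarith [norm_nonneg (u 0)]

lemma norm_sq_le_two_mul_sqrt_mul_sqrt {u : ℕ → E} {N : ℕ} (hN : u N = 0) :
    ‖u 0‖ ^ 2 ≤ 2 * √(∑ j ∈ range N, ‖u (j + 1) - u j‖ ^ 2) * √(∑ j ∈ range N, ‖u j‖ ^ 2) := by
  set A := ∑ j ∈ range N, ‖u (j + 1) - u j‖ ^ 2
  set B := ∑ j ∈ range N, ‖u j‖ ^ 2
  have htel : ‖u 0‖ ^ 2 = ∑ j ∈ range N, (‖u j‖ ^ 2 - ‖u (j + 1)‖ ^ 2) := by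
    rw [sum_range_sub', hN, norm_zero, zero_pow two_ne_zero, sub_zero]
  have hshift : √(∑ j ∈ range N, ‖u (j + 1)‖ ^ 2) ≤ √B :=
    Real.sqrt_le_sqrt (sum_range_norm_succ_sq_le hN)
  calc ‖u 0‖ ^ 2
      ≤ ∑ j ∈ range N, ‖u (j + 1) - u j‖ * (‖u j‖ + ‖u (j + 1)‖) := by
        rw [htel]; exact sum_le_sum fun j _ => norm_sq_sub_norm_sq_le _ _
    _ = ∑ j ∈ range N, ‖u (j + 1) - u j‖ * ‖u j‖
          + ∑ j ∈ range N, ‖u (j + 1) - u j‖ * ‖u (j + 1)‖ := by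
        rw [← sum_add_distrib]; simp only [mul_add]
    _ ≤ √A * √B + √A * √(∑ j ∈ range N, ‖u (j + 1)‖ ^ 2) :=
        add_le_add (Real.sum_mul_le_sqrt_mul_sqrt _ _ _) (Real.sum_mul_le_sqrt_mul_sqrt _ _ _)
    _ ≤ 2 * √A * √B := by nlinarith [Real.sqrt_nonneg A]

end Telescoping

lemma tsum_eq_sum_range_of_forall_ge {f : ℕ → ℝ} {N : ℕ} (hf : ∀ j, N ≤ j → f j = 0) :
    ∑' j, f j = ∑ j ∈ range N, f j :=
  tsum_eq_sum fun j hj => hf j (by simpa using hj)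

lemma Set.Finite.exists_forall_ge_eq_zero {M : Type*} [Zero M] {v : ℕ → M}
    (hv : (Function.support v).Finite) : ∃ N, ∀ j, N ≤ j → v j = 0 := by
  obtain ⟨N, hN⟩ := hv.bddAbove
  exact ⟨N + 1, fun j hj => Function.notMem_support.mp fun h => by have := hN h; omega⟩

theorem stmt_9_general {r : ℕ} (m : ℝ) (hm : 0 < m)
    (v : ℕ → EuclideanSpace ℂ (Fin r)) (hv : (Function.support v).Finite) :
    ‖v 0‖ ^ 2 ≤
      2 * Real.sqrt (m⁻¹ * ∑' j : ℕ, ‖m • (v (j + 1) - v j)‖ ^ 2)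
        * Real.sqrt (m⁻¹ * ∑' j : ℕ, ‖v j‖ ^ 2) := by
  obtain ⟨N, hN⟩ := hv.exists_forall_ge_eq_zero
  set A := ∑ j ∈ range N, ‖v (j + 1) - v j‖ ^ 2
  set B := ∑ j ∈ range N, ‖v j‖ ^ 2
  have hA : ∑' j, ‖m • (v (j + 1) - v j)‖ ^ 2 = m ^ 2 * A := by
    simp only [norm_smul, Real.norm_of_nonneg hm.le, mul_pow]
    rw [tsum_mul_left, tsum_eq_sum_range_of_forall_ge fun j hj => by
      rw [hN j hj, hN (j + 1) (by omega), sub_zero, norm_zero, zero_pow two_ne_zero]]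
  have hB : ∑' j, ‖v j‖ ^ 2 = B :=
    tsum_eq_sum_range_of_forall_ge fun j hj => by rw [hN j hj, norm_zero, zero_pow two_ne_zero]
  have hweights : √(m⁻¹ * (m ^ 2 * A)) * √(m⁻¹ * B) = √A * √B := by
    rw [← Real.sqrt_mul (by positivity), ← Real.sqrt_mul (by positivity)]
    congr 1
    field_simp
  rw [hA, hB, mul_assoc, hweights, ← mul_assoc]
  exact norm_sq_le_two_mul_sqrt_mul_sqrt (hN N le_rfl)

/-- **Discrete boundary estimate (from the proof of Lemma 3.11 / `l.dbound`).**
For a finitely supported sequence `v : ℕ → ℂ^r` and the `m⁻¹`-weighted `ℓ²` norms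
`‖v‖² = m⁻¹ Σ |v_j|²`, `‖Dv‖² = m⁻¹ Σ |m (v_{j+1} − v_j)|²`, one has
`|v₀|² ≤ 2 ‖Dv‖ ‖v‖`. -/
theorem stmt_9 {r : ℕ} (hr : 1 ≤ r) (m : ℝ) (hm : 0 < m)
    (v : ℕ → EuclideanSpace ℂ (Fin r)) (hv : (Function.support v).Finite) :
    ‖v 0‖ ^ 2 ≤
      2 * Real.sqrt (m⁻¹ * ∑' j : ℕ, ‖m • (v (j + 1) - v j)‖ ^ 2)
        * Real.sqrt (m⁻¹ * ∑' j : ℕ, ‖v j‖ ^ 2) :=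
  stmt_9_general m hm v hv
end

section
/- For every real α > 0 one has √2·Γ((α+1)/2)/Γ(α/2) ≤ √α, and for every real α ≥ 1 one has √(α−1) ≤ √2·Γ((α+1)/2)/Γ(α/2). (Equivalently, the mean of a chi-distributed random variable with parameter α, which equals √2·Γ((α+1)/2)/Γ(α/2), satisfies √((α−1)⁺) ≤ E χ_α ≤ √α.) -/
/-!
Log-convexity of `Γ` on `(0, ∞)` gives `Γ(x + 1/2) ≤ Γ(x)^(1/2) Γ(x + 1)^(1/2) = √x Γ(x)`.
At `x = α/2` this is the upper bound; at `x = (α - 1)/2`, combined with `Γ(x + 1) = x Γ(x)`,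
it becomes `√x ≤ Γ(x + 1)/Γ(x + 1/2)`, which is the lower bound.
-/

open Real

lemma Real.Gamma_add_half_le_sqrt_mul_Gamma {x : ℝ} (hx : 0 < x) :
    Gamma (x + 1 / 2) ≤ √x * Gamma x := by
  have hconv := Gamma_mul_add_mul_le_rpow_Gamma_mul_rpow_Gamma hx (by linarith : 0 < x + 1)
    (by norm_num : (0 : ℝ) < 1 / 2) (by norm_num : (0 : ℝ) < 1 / 2) (by norm_num)
  calc Gamma (x + 1 / 2) = Gamma (1 / 2 * x + 1 / 2 * (x + 1)) := by ring_nf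
    _ ≤ Gamma x ^ (1 / 2 : ℝ) * Gamma (x + 1) ^ (1 / 2 : ℝ) := hconv
    _ = √(Gamma x) * √(x * Gamma x) := by
        rw [Gamma_add_one hx.ne', ← sqrt_eq_rpow, ← sqrt_eq_rpow]
    _ = √x * Gamma x := by
        rw [sqrt_mul hx.le, mul_left_comm, mul_self_sqrt (Gamma_pos_of_pos hx).le]

lemma Real.Gamma_add_half_div_Gamma_le_sqrt {x : ℝ} (hx : 0 < x) :
    Gamma (x + 1 / 2) / Gamma x ≤ √x :=
  (div_le_iff₀ (Gamma_pos_of_pos hx)).2 (Gamma_add_half_le_sqrt_mul_Gamma hx)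

lemma Real.sqrt_le_Gamma_add_one_div_Gamma_add_half {x : ℝ} (hx : 0 ≤ x) :
    √x ≤ Gamma (x + 1) / Gamma (x + 1 / 2) := by
  have hhalf : 0 < Gamma (x + 1 / 2) := Gamma_pos_of_pos (by linarith)
  rcases hx.eq_or_lt with rfl | hx
  · simp only [sqrt_zero]
    positivity
  rw [le_div_iff₀ hhalf, Gamma_add_one hx.ne']
  calc √x * Gamma (x + 1 / 2) ≤ √x * (√x * Gamma x) :=
        mul_le_mul_of_nonneg_left (Gamma_add_half_le_sqrt_mul_Gamma hx) (sqrt_nonneg x)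
    _ = x * Gamma x := by rw [← mul_assoc, mul_self_sqrt hx.le]

/-- **Chi-distribution mean bounds (equation (4.3) / `chi`).**
The mean `√2 Γ((α+1)/2)/Γ(α/2)` of a chi-distributed random variable with parameter `α`
satisfies `√((α−1)⁺) ≤ E χ_α ≤ √α`: the upper bound holds for all `α > 0`, and the lower
bound `√(α−1) ≤ E χ_α` holds for all `α ≥ 1`. -/
theorem stmt_11 :
    (∀ α : ℝ, 0 < α →
      Real.sqrt 2 * Real.Gamma ((α + 1) / 2) / Real.Gamma (α / 2) ≤ Real.sqrt α) ∧
    (∀ α : ℝ, 1 ≤ α →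
      Real.sqrt (α - 1) ≤ Real.sqrt 2 * Real.Gamma ((α + 1) / 2) / Real.Gamma (α / 2)) := by
  constructor
  · intro α hα
    calc √2 * Gamma ((α + 1) / 2) / Gamma (α / 2)
        = √2 * (Gamma (α / 2 + 1 / 2) / Gamma (α / 2)) := by ring_nf
      _ ≤ √2 * √(α / 2) :=
          mul_le_mul_of_nonneg_left (Gamma_add_half_div_Gamma_le_sqrt (by linarith)) (sqrt_nonneg 2)
      _ = √α := by rw [← sqrt_mul zero_le_two]; ring_nf
  · intro α hα
    calc √(α - 1) = √2 * √((α - 1) / 2) := by rw [← sqrt_mul zero_le_two]; ring_nf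
      _ ≤ √2 * (Gamma ((α - 1) / 2 + 1) / Gamma ((α - 1) / 2 + 1 / 2)) :=
          mul_le_mul_of_nonneg_left (sqrt_le_Gamma_add_one_div_Gamma_add_half (by linarith))
            (sqrt_nonneg 2)
      _ = √2 * Gamma ((α + 1) / 2) / Gamma (α / 2) := by ring_nf
end

section
/- (Matrix Riccati equation.) Let r ≥ 1, λ ∈ ℝ, let B : [0,∞) → M_r(ℂ) be continuous, and let F, G : [0,∞) → M_r(ℂ) be differentiable with F'(x) = √2·B(x)F(x) + G(x) and G'(x) = (rx − λ)·F(x) − 2B(x)²F(x) − √2·B(x)G(x). Let I ⊆ [0,∞) be an interval on which F(x) is invertible, and set Q(x) = G(x)F(x)^{-1} for x ∈ I. Then Q is differentiable on I and satisfies Q'(x) = (rx − λ)·I_r − (Q(x) + √2·B(x))² for all x ∈ I. Moreover, if B(x) is Hermitian for all x and F(x₀)†G(x₀) is Hermitian at some x₀ ∈ I, then Q(x) is Hermitian for all x ∈ I. -/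
open Matrix

/-!
The derivative of `Q = G F⁻¹` is `G' F⁻¹ - G F⁻¹ F' F⁻¹` by the product rule and the derivative
`-F⁻¹ F' F⁻¹` of matrix inversion; substituting the system and `√2 · √2 = 2` this collapses to
`(rx - λ) - (Q + √2 B)²`. For Hermitian `B` the Wronskian `Fᴴ G - Gᴴ F` has zero derivative, so it
vanishes on all of `I` once it vanishes at `x₀`, and `Fᴴ G = Gᴴ F` with `F` invertible says exactly
that `G F⁻¹` is Hermitian.
-/

section Derivatives

/- `HasDerivWithinAt` only sees the topology of `Matrix n n α`, so any norm inducing it will do;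
the `L∞` operator norm is chosen because it makes matrices a normed algebra. -/
attribute [local instance] Matrix.linftyOpNormedRing Matrix.linftyOpNormedAlgebra

variable {𝕜 : Type*} [NontriviallyNormedField 𝕜] {n : Type*} [Fintype n] [DecidableEq n]

def Matrix.ofContinuousLinearEquiv (α : Type*) [NormedField α] [NormedAlgebra 𝕜 α] :
    (n → n → α) ≃L[𝕜] Matrix n n α :=
  { Matrix.ofLinearEquiv 𝕜 with
    continuous_toFun := continuous_id
    continuous_invFun := continuous_id }

theorem hasDerivWithinAt_matrix_iff {α : Type*} [NormedField α] [NormedAlgebra 𝕜 α]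
    {F : 𝕜 → Matrix n n α} {F' : Matrix n n α} {s : Set 𝕜} {x : 𝕜} :
    HasDerivWithinAt F F' s x ↔ ∀ i j, HasDerivWithinAt (fun t => F t i j) (F' i j) s x := by
  let e : (n → n → α) ≃L[𝕜] Matrix n n α := Matrix.ofContinuousLinearEquiv α
  have he : HasDerivWithinAt F F' s x ↔
      HasDerivWithinAt (fun t => e.symm (F t)) (e.symm F') s x := by
    refine ⟨fun h => e.symm.hasFDerivAt.comp_hasDerivWithinAt x h, fun h => ?_⟩
    exact e.hasFDerivAt.comp_hasDerivWithinAt x h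
  rw [he, hasDerivWithinAt_pi]
  exact forall_congr' fun i => hasDerivWithinAt_pi

theorem HasDerivWithinAt.matrix_inv {α : Type*} [RCLike α] [NormedAlgebra 𝕜 α]
    {F : 𝕜 → Matrix n n α} {F' : Matrix n n α} {s : Set 𝕜} {x : 𝕜}
    (hF : HasDerivWithinAt F F' s x) (hx : IsUnit (F x)) :
    HasDerivWithinAt (fun t => (F t)⁻¹) (-((F x)⁻¹ * F' * (F x)⁻¹)) s x := by
  obtain ⟨u, hu⟩ := hx
  have hinv := hasFDerivAt_ringInverse (𝕜 := 𝕜) u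
  rw [hu] at hinv
  have := hinv.comp_hasDerivWithinAt x hF
  simp only [Function.comp_def, ← nonsing_inv_eq_ringInverse] at this
  have hval : (-ContinuousLinearMap.mulLeftRight 𝕜 (Matrix n n α) ↑u⁻¹ ↑u⁻¹) F'
      = -((F x)⁻¹ * F' * (F x)⁻¹) := by
    simp [← hu, Matrix.coe_units_inv]
  rwa [hval] at this

theorem HasDerivWithinAt.matrix_conjTranspose {α : Type*} [RCLike α]
    {F : ℝ → Matrix n n α} {F' : Matrix n n α} {s : Set ℝ} {x : ℝ}
    (hF : HasDerivWithinAt F F' s x) : HasDerivWithinAt (fun t => (F t)ᴴ) F'ᴴ s x :=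
  hasDerivWithinAt_matrix_iff.2 fun i j => (hasDerivWithinAt_matrix_iff.1 hF j i).star

theorem HasDerivWithinAt.matrix_mul {α : Type*} [NormedField α] [NormedAlgebra 𝕜 α]
    {F G : 𝕜 → Matrix n n α} {F' G' : Matrix n n α} {s : Set 𝕜} {x : 𝕜}
    (hF : HasDerivWithinAt F F' s x) (hG : HasDerivWithinAt G G' s x) :
    HasDerivWithinAt (fun t => F t * G t) (F' * G x + F x * G') s x :=
  hF.mul hG

theorem HasDerivWithinAt.conjTranspose_mul_sub {α : Type*} [RCLike α]
    {F G : ℝ → Matrix n n α} {F' G' : Matrix n n α} {s : Set ℝ} {x : ℝ}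
    (hF : HasDerivWithinAt F F' s x) (hG : HasDerivWithinAt G G' s x) :
    HasDerivWithinAt (fun t => (F t)ᴴ * G t - (G t)ᴴ * F t)
      (F'ᴴ * G x + (F x)ᴴ * G' - (G'ᴴ * F x + (G x)ᴴ * F')) s x :=
  (hF.matrix_conjTranspose.matrix_mul hG).sub (hG.matrix_conjTranspose.matrix_mul hF)

end Derivatives

theorem Convex.eq_of_forall_hasDerivWithinAt_zero {E : Type*} [NormedAddCommGroup E]
    [NormedSpace ℝ E] {f : ℝ → E} {s : Set ℝ} (hs : Convex ℝ s)
    (hf : ∀ x ∈ s, HasDerivWithinAt f 0 s x) {x y : ℝ} (hx : x ∈ s) (hy : y ∈ s) :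
    f x = f y := by
  have := hs.norm_image_sub_le_of_norm_hasDerivWithin_le hf (fun _ _ => norm_zero.le) hy hx
  rw [zero_mul, norm_le_zero_iff, sub_eq_zero] at this
  exact this

section Algebra

variable {n : Type*} [Fintype n] [DecidableEq n] {R : Type*} [CommRing R]

theorem riccati_identity {c s : R} (hs : s * s = 2) {B F G : Matrix n n R} (hF : IsUnit F) :
    (c • F - (2 : R) • (B * B * F) - s • (B * G)) * F⁻¹
      + G * -(F⁻¹ * (s • (B * F) + G) * F⁻¹)
      = c • 1 - (G * F⁻¹ + s • B) ^ 2 := by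
  have hFF : F * F⁻¹ = 1 := mul_nonsing_inv F ((isUnit_iff_isUnit_det F).1 hF)
  simp only [pow_two, mul_add, add_mul, sub_mul, mul_neg, smul_mul_assoc,
    mul_smul_comm, smul_smul, smul_add, Matrix.mul_assoc, hFF, Matrix.mul_one, hs]
  abel

theorem wronskian_identity [StarRing R] {c s : R} (hc : star c = c) (hs : star s = s)
    {B F G : Matrix n n R} (hB : B.IsHermitian) :
    (s • (B * F) + G)ᴴ * G + Fᴴ * (c • F - (2 : R) • (B * B * F) - s • (B * G))
      - ((c • F - (2 : R) • (B * B * F) - s • (B * G))ᴴ * F + Gᴴ * (s • (B * F) + G)) = 0 := by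
  simp only [conjTranspose_add, conjTranspose_sub, conjTranspose_smul, conjTranspose_mul,
    hB.eq, hc, hs, star_ofNat, mul_add, add_mul, mul_sub, sub_mul, smul_mul_assoc,
    mul_smul_comm, Matrix.mul_assoc]
  abel

theorem isHermitian_mul_inv_of_conjTranspose_mul_eq [StarRing R] {F G : Matrix n n R}
    (hF : IsUnit F) (h : Fᴴ * G = Gᴴ * F) : (G * F⁻¹).IsHermitian := by
  have hdet : IsUnit F.det := (isUnit_iff_isUnit_det F).1 hF
  have hdetH : IsUnit Fᴴ.det := by rw [det_conjTranspose]; exact hdet.star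
  calc (G * F⁻¹)ᴴ = (Fᴴ)⁻¹ * (Gᴴ * F) * F⁻¹ := by
        rw [conjTranspose_mul, conjTranspose_nonsing_inv, ← Matrix.mul_assoc,
          mul_nonsing_inv_cancel_right _ _ hdet]
    _ = G * F⁻¹ := by rw [← h, nonsing_inv_mul_cancel_left _ _ hdetH]

end Algebra

theorem stmt_13_general {r : ℕ} (lam : ℝ)
    (B F G : ℝ → Matrix (Fin r) (Fin r) ℂ)
    (hF : ∀ x : ℝ, 0 ≤ x → ∀ i j : Fin r,
      HasDerivWithinAt (fun t => F t i j)
        ((((Real.sqrt 2 : ℝ) : ℂ) • (B x * F x) + G x) i j) (Set.Ici 0) x)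
    (hG : ∀ x : ℝ, 0 ≤ x → ∀ i j : Fin r,
      HasDerivWithinAt (fun t => G t i j)
        ((((r * x - lam : ℝ) : ℂ) • F x - (2 : ℂ) • (B x * B x * F x)
          - ((Real.sqrt 2 : ℝ) : ℂ) • (B x * G x)) i j) (Set.Ici 0) x)
    (I : Set ℝ) (hI_sub : I ⊆ Set.Ici 0) (hI_conn : I.OrdConnected)
    (hFinv : ∀ x ∈ I, IsUnit (F x)) :
    (∀ x ∈ I, ∀ i j : Fin r,
      HasDerivWithinAt (fun t => (G t * (F t)⁻¹) i j)
        (((((r * x - lam : ℝ) : ℂ) • (1 : Matrix (Fin r) (Fin r) ℂ)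
          - (G x * (F x)⁻¹ + ((Real.sqrt 2 : ℝ) : ℂ) • B x) ^ 2) i j)) I x) ∧
    ((∀ x : ℝ, 0 ≤ x → (B x).IsHermitian) →
      (∃ x₀ ∈ I, ((F x₀)ᴴ * G x₀).IsHermitian) →
      ∀ x ∈ I, (G x * (F x)⁻¹).IsHermitian) := by
  have hs : ((√2 : ℝ) : ℂ) * ((√2 : ℝ) : ℂ) = 2 := by
    rw [← Complex.ofReal_mul, Real.mul_self_sqrt zero_le_two, Complex.ofReal_ofNat]
  have hFd : ∀ x ∈ I, HasDerivWithinAt F (((√2 : ℝ) : ℂ) • (B x * F x) + G x) I x :=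
    fun x hx => hasDerivWithinAt_matrix_iff.2 fun i j => (hF x (hI_sub hx) i j).mono hI_sub
  have hGd : ∀ x ∈ I, HasDerivWithinAt G (((r * x - lam : ℝ) : ℂ) • F x
      - (2 : ℂ) • (B x * B x * F x) - ((√2 : ℝ) : ℂ) • (B x * G x)) I x :=
    fun x hx => hasDerivWithinAt_matrix_iff.2 fun i j => (hG x (hI_sub hx) i j).mono hI_sub
  refine ⟨fun x hx => hasDerivWithinAt_matrix_iff.1 ?_, ?_⟩
  · have := (hGd x hx).matrix_mul ((hFd x hx).matrix_inv (hFinv x hx))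
    rwa [riccati_identity hs (hFinv x hx)] at this
  · rintro hB ⟨x₀, hx₀, hW₀⟩ x hx
    have hW : ∀ y ∈ I, HasDerivWithinAt (fun t => (F t)ᴴ * G t - (G t)ᴴ * F t) 0 I y := by
      intro y hy
      have := (hFd y hy).conjTranspose_mul_sub (hGd y hy)
      rwa [wronskian_identity (Complex.conj_ofReal _) (Complex.conj_ofReal _)
        (hB y (hI_sub hy))] at this
    have hconst : (F x)ᴴ * G x - (G x)ᴴ * F x = (F x₀)ᴴ * G x₀ - (G x₀)ᴴ * F x₀ := by
      ext i j
      exact hI_conn.convex.eq_of_forall_hasDerivWithinAt_zero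
        (fun y hy => hasDerivWithinAt_matrix_iff.1 (hW y hy) i j) hx hx₀
    have h₀ : (G x₀)ᴴ * F x₀ = (F x₀)ᴴ * G x₀ := by
      simpa only [conjTranspose_mul, conjTranspose_conjTranspose] using hW₀.eq
    refine isHermitian_mul_inv_of_conjTranspose_mul_eq (hFinv x hx) (sub_eq_zero.1 ?_)
    rw [hconst, h₀, sub_self]

/-- **Matrix Riccati equation off the focal points.**
If `(F, G)` solves `F' = √2 B F + G`, `G' = (rx − λ)F − 2B²F − √2 B G` on `[0,∞)` and `F`
is invertible on an interval `I ⊆ [0,∞)`, then `Q = G F⁻¹` is differentiable on `I` with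
`Q' = (rx − λ)·1 − (Q + √2 B)²`; moreover, if `B` is Hermitian and `F(x₀)ᴴG(x₀)` is
Hermitian at some point `x₀ ∈ I`, then `Q` is Hermitian on `I`. -/
theorem stmt_13 {r : ℕ} (hr : 1 ≤ r) (lam : ℝ)
    (B F G : ℝ → Matrix (Fin r) (Fin r) ℂ)
    (hB_cont : ∀ i j : Fin r, ContinuousOn (fun x => B x i j) (Set.Ici 0))
    (hF : ∀ x : ℝ, 0 ≤ x → ∀ i j : Fin r,
      HasDerivWithinAt (fun t => F t i j)
        ((((Real.sqrt 2 : ℝ) : ℂ) • (B x * F x) + G x) i j) (Set.Ici 0) x)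
    (hG : ∀ x : ℝ, 0 ≤ x → ∀ i j : Fin r,
      HasDerivWithinAt (fun t => G t i j)
        ((((r * x - lam : ℝ) : ℂ) • F x - (2 : ℂ) • (B x * B x * F x)
          - ((Real.sqrt 2 : ℝ) : ℂ) • (B x * G x)) i j) (Set.Ici 0) x)
    (I : Set ℝ) (hI_sub : I ⊆ Set.Ici 0) (hI_conn : I.OrdConnected)
    (hFinv : ∀ x ∈ I, IsUnit (F x)) :
    (∀ x ∈ I, ∀ i j : Fin r,
      HasDerivWithinAt (fun t => (G t * (F t)⁻¹) i j)
        (((((r * x - lam : ℝ) : ℂ) • (1 : Matrix (Fin r) (Fin r) ℂ)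
          - (G x * (F x)⁻¹ + ((Real.sqrt 2 : ℝ) : ℂ) • B x) ^ 2) i j)) I x) ∧
    ((∀ x : ℝ, 0 ≤ x → (B x).IsHermitian) →
      (∃ x₀ ∈ I, ((F x₀)ᴴ * G x₀).IsHermitian) →
      ∀ x ∈ I, (G x * (F x)⁻¹).IsHermitian) :=
  stmt_13_general lam B F G hF hG I hI_sub hI_conn hFinv
end

section
/- Let I ⊆ ℝ be an interval, let M : I → M_r(ℂ) and p : I → ℝ, and let Q̃ : I → M_r(ℂ) be differentiable with Q̃'(x) = (I_r + Q̃(x)M(x))·(I_r + M(x)Q̃(x)) − p(x)·Q̃(x)² for all x ∈ I. Suppose x₀ ∈ I, Q̃(x₀) is Hermitian, and v ∈ ℂ^r satisfies |v| = 1 and Q̃(x₀)v = 0. Then v† Q̃'(x₀) v = 1. -/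
open Matrix

theorem Matrix.IsHermitian.star_vecMul_eq_zero {α n : Type*} [Fintype n] [CommSemiring α]
    [StarRing α] {A : Matrix n n α} (hA : A.IsHermitian) {v : n → α} (hv : A *ᵥ v = 0) :
    star v ᵥ* A = 0 := by
  simpa [star_mulVec, hA.eq] using congrArg star hv

theorem RCLike.star_dotProduct_self_eq_sum_norm_sq {𝕜 n : Type*} [RCLike 𝕜] [Fintype n]
    (v : n → 𝕜) : star v ⬝ᵥ v = ((∑ i, ‖v i‖ ^ 2 : ℝ) : 𝕜) := by
  simp [dotProduct, RCLike.conj_mul]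

/-- At a kernel vector of the Hermitian coordinate `Q`, every term of the Riccati vector field
except `1` is killed on one side by `Q`. -/
theorem star_dotProduct_riccati_mulVec_of_mulVec_eq_zero {α n : Type*} [Fintype n]
    [DecidableEq n] [CommRing α] [StarRing α] {Q : Matrix n n α} (hQ : Q.IsHermitian)
    (M : Matrix n n α) (c : α) {v : n → α} (hv : Q *ᵥ v = 0) :
    star v ⬝ᵥ (((1 + Q * M) * (1 + M * Q) - c • Q ^ 2) *ᵥ v) = star v ⬝ᵥ v := by
  have hDv : ((1 + Q * M) * (1 + M * Q) - c • Q ^ 2) *ᵥ v = v + Q *ᵥ (M *ᵥ v) := by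
    simp [sub_mulVec, smul_mulVec, sq, ← mulVec_mulVec, add_mulVec, hv]
  rw [hDv, dotProduct_add, dotProduct_mulVec, hQ.star_vecMul_eq_zero hv, zero_dotProduct,
    add_zero]

theorem stmt_15_general {r : ℕ}
    (M : ℝ → Matrix (Fin r) (Fin r) ℂ) (p : ℝ → ℝ)
    (Qt : ℝ → Matrix (Fin r) (Fin r) ℂ)
    (x₀ : ℝ)
    (hherm : (Qt x₀).IsHermitian)
    (v : Fin r → ℂ) (hv : ∑ i, ‖v i‖ ^ 2 = 1)
    (hker : (Qt x₀).mulVec v = 0)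
    (D : Matrix (Fin r) (Fin r) ℂ)
    (hD : D = ((1 : Matrix (Fin r) (Fin r) ℂ) + Qt x₀ * M x₀)
      * ((1 : Matrix (Fin r) (Fin r) ℂ) + M x₀ * Qt x₀)
      - ((p x₀ : ℝ) : ℂ) • (Qt x₀ ^ 2)) :
    star v ⬝ᵥ D.mulVec v = 1 := by
  rw [hD, star_dotProduct_riccati_mulVec_of_mulVec_eq_zero hherm _ _ hker,
    RCLike.star_dotProduct_self_eq_sum_norm_sq, hv, RCLike.ofReal_one]

/-- **Unit crossing speed at a focal point.**
Suppose `Q̃` satisfies `Q̃' = (1 + Q̃M)(1 + MQ̃) − p Q̃²` on an interval `I`, `Q̃(x₀)` is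
Hermitian, and `v` is a unit vector with `Q̃(x₀)v = 0`.  Then `v† Q̃'(x₀) v = 1`, i.e. the
eigenvalue of `Q̃` vanishing at `x₀` is pushed up through zero with unit speed. -/
theorem stmt_15 {r : ℕ} (hr : 1 ≤ r) (I : Set ℝ)
    (M : ℝ → Matrix (Fin r) (Fin r) ℂ) (p : ℝ → ℝ)
    (Qt : ℝ → Matrix (Fin r) (Fin r) ℂ)
    (hQ' : ∀ x ∈ I, ∀ i j : Fin r,
      HasDerivWithinAt (fun t => Qt t i j)
        (((((1 : Matrix (Fin r) (Fin r) ℂ) + Qt x * M x)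
          * ((1 : Matrix (Fin r) (Fin r) ℂ) + M x * Qt x)
          - ((p x : ℝ) : ℂ) • (Qt x ^ 2)) : Matrix (Fin r) (Fin r) ℂ) i j) I x)
    (x₀ : ℝ) (hx₀ : x₀ ∈ I)
    (hherm : (Qt x₀).IsHermitian)
    (v : Fin r → ℂ) (hv : ∑ i, ‖v i‖ ^ 2 = 1)
    (hker : (Qt x₀).mulVec v = 0)
    (D : Matrix (Fin r) (Fin r) ℂ)
    (hD : D = ((1 : Matrix (Fin r) (Fin r) ℂ) + Qt x₀ * M x₀)
      * ((1 : Matrix (Fin r) (Fin r) ℂ) + M x₀ * Qt x₀)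
      - ((p x₀ : ℝ) : ℂ) • (Qt x₀ ^ 2)) :
    star v ⬝ᵥ D.mulVec v = 1 :=
  stmt_15_general M p Qt x₀ hherm v hv hker D hD
end

section
/- (Hadamard first variation formula.) Let n ≥ 1 and let A : ℝ → M_n(ℂ) be differentiable with A(t) Hermitian for every t. Suppose λ : ℝ → ℝ and v : ℝ → ℂⁿ are differentiable and satisfy A(t)v(t) = λ(t)v(t) and ⟨v(t), v(t)⟩ = 1 for all t. Then for every t₀, λ'(t₀) = ⟨v(t₀), A'(t₀) v(t₀)⟩. -/
open Matrix

/-!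
Differentiate the Rayleigh quotient `λ(t) = ⟨v(t), A(t) v(t)⟩`. The product rule gives
`λ' = ⟨v', A v⟩ + ⟨v, A' v⟩ + ⟨v, A v'⟩`. Since `A` is Hermitian and `λ` is real, the outer
two terms equal `λ (⟨v', v⟩ + ⟨v, v'⟩)`, which is the derivative of `⟨v, v⟩ = 1`, hence zero.
-/

section ProductRule

variable {𝕜 : Type*} [NontriviallyNormedField 𝕜] {𝔸 : Type*} [NormedCommRing 𝔸]
  [NormedAlgebra 𝕜 𝔸] {m ι : Type*} [Fintype ι] {t : 𝕜}

theorem HasDerivAt.dotProduct {u w : 𝕜 → ι → 𝔸} {u' w' : ι → 𝔸}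
    (hu : HasDerivAt u u' t) (hw : HasDerivAt w w' t) :
    HasDerivAt (fun s => u s ⬝ᵥ w s) (u' ⬝ᵥ w t + u t ⬝ᵥ w') t := by
  rw [hasDerivAt_pi] at hu hw
  have := HasDerivAt.fun_sum (u := Finset.univ) fun i _ => (hu i).fun_mul (hw i)
  rw [Finset.sum_add_distrib] at this
  exact this

theorem HasDerivAt.mulVec {A : 𝕜 → Matrix m ι 𝔸} {A' : Matrix m ι 𝔸}
    {w : 𝕜 → ι → 𝔸} {w' : ι → 𝔸}
    (hw : HasDerivAt w w' t) (hA : ∀ i j, HasDerivAt (fun s => A s i j) (A' i j) t) :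
    HasDerivAt (fun s => A s *ᵥ w s) (A' *ᵥ w t + A t *ᵥ w') t :=
  hasDerivAt_pi.2 fun i => (hasDerivAt_pi.2 (hA i)).dotProduct hw

end ProductRule

theorem Matrix.IsHermitian.star_dotProduct_mulVec {α ι : Type*} [CommSemiring α] [StarRing α]
    [Fintype ι] {A : Matrix ι ι α} (hA : A.IsHermitian) (v w : ι → α) :
    star v ⬝ᵥ A *ᵥ w = star (A *ᵥ v) ⬝ᵥ w := by
  rw [dotProduct_mulVec, star_mulVec, hA.eq]

theorem HasDerivAt.of_ofReal_comp {f : ℝ → ℝ} {z : ℂ} {t : ℝ}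
    (h : HasDerivAt (fun s => (f s : ℂ)) z t) : HasDerivAt f z.re t ∧ (z.re : ℂ) = z := by
  have hre := (Complex.reCLM.hasFDerivAt (x := (f t : ℂ))).comp_hasDerivAt t h
  have him := (Complex.imCLM.hasFDerivAt (x := (f t : ℂ))).comp_hasDerivAt t h
  have him_zero : z.im = 0 := HasDerivAt.unique (f := fun _ => (0 : ℝ)) him (hasDerivAt_const t 0)
  exact ⟨hre, Complex.ext rfl (by simpa using him_zero.symm)⟩

theorem stmt_16_general {n : ℕ}
    (A A' : ℝ → Matrix (Fin n) (Fin n) ℂ)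
    (hA : ∀ (t : ℝ) (i j : Fin n), HasDerivAt (fun s => A s i j) (A' t i j) t)
    (hherm : ∀ t : ℝ, (A t).IsHermitian)
    (lam : ℝ → ℝ) (v : ℝ → Fin n → ℂ)
    (hv_diff : ∀ i : Fin n, Differentiable ℝ (fun t => v t i))
    (heig : ∀ t : ℝ, (A t).mulVec (v t) = ((lam t : ℝ) : ℂ) • v t)
    (hnorm : ∀ t : ℝ, star (v t) ⬝ᵥ v t = 1)
    (t₀ : ℝ) :
    ((deriv lam t₀ : ℝ) : ℂ) = star (v t₀) ⬝ᵥ (A' t₀).mulVec (v t₀) := by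
  set v' : Fin n → ℂ := fun i => deriv (fun t => v t i) t₀
  have hv : HasDerivAt v v' t₀ := hasDerivAt_pi.2 fun i => (hv_diff i t₀).hasDerivAt
  have hnorm' : star v' ⬝ᵥ v t₀ + star (v t₀) ⬝ᵥ v' = 0 :=
    (hv.star.dotProduct hv).unique (by simpa only [hnorm] using hasDerivAt_const t₀ (1 : ℂ))
  have hquad := hv.star.dotProduct (hv.mulVec (hA t₀))
  have hrayleigh : (fun s => star (v s) ⬝ᵥ A s *ᵥ v s) = fun s => (lam s : ℂ) := by
    funext s
    rw [heig, dotProduct_smul, hnorm, smul_eq_mul, mul_one]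
  rw [hrayleigh] at hquad
  obtain ⟨hlam, hreal⟩ := hquad.of_ofReal_comp
  rw [hlam.deriv, hreal, dotProduct_add, (hherm t₀).star_dotProduct_mulVec (v t₀) v', heig,
    star_smul, Complex.star_def, Complex.conj_ofReal, dotProduct_smul, smul_dotProduct]
  linear_combination (lam t₀ : ℂ) * hnorm'

/-- **Hadamard first variation formula.**
If `A(t)` is a differentiable path of Hermitian matrices with differentiable eigenvalue
path `λ(t)` and differentiable normalized eigenvector path `v(t)`, then
`λ'(t₀) = ⟨v(t₀), A'(t₀) v(t₀)⟩`. -/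
theorem stmt_16 {n : ℕ} (hn : 1 ≤ n)
    (A A' : ℝ → Matrix (Fin n) (Fin n) ℂ)
    (hA : ∀ (t : ℝ) (i j : Fin n), HasDerivAt (fun s => A s i j) (A' t i j) t)
    (hherm : ∀ t : ℝ, (A t).IsHermitian)
    (lam : ℝ → ℝ) (v : ℝ → Fin n → ℂ)
    (hlam_diff : Differentiable ℝ lam)
    (hv_diff : ∀ i : Fin n, Differentiable ℝ (fun t => v t i))
    (heig : ∀ t : ℝ, (A t).mulVec (v t) = ((lam t : ℝ) : ℂ) • v t)
    (hnorm : ∀ t : ℝ, star (v t) ⬝ᵥ v t = 1)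
    (t₀ : ℝ) :
    ((deriv lam t₀ : ℝ) : ℂ) = star (v t₀) ⬝ᵥ (A' t₀).mulVec (v t₀) :=
  stmt_16_general A A' hA hherm lam v hv_diff heig hnorm t₀
end

section
/- (Lax pair compatibility and Painlevé II.) Let u : ℝ → ℝ be twice differentiable. For (x,w) ∈ ℝ², define the 2×2 real matrices A_w(x,w) = [[u(x)², −w·u(x) − u'(x)], [−w·u(x) + u'(x), w² − x − u(x)²]] and A_x(x,w) = [[0, u(x)], [u(x), −w]]. Then the zero-curvature equation ∂_x A_w(x,w) − ∂_w A_x(x,w) = A_x(x,w)·A_w(x,w) − A_w(x,w)·A_x(x,w) holds for all (x,w) ∈ ℝ² if and only if u satisfies the Painlevé II equation u''(x) = 2u(x)³ + x·u(x) for all x ∈ ℝ. -/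
/-!
Differentiating `A_w` in `x` and `A_x` in `w` entrywise, the zero-curvature defect
`∂ₓ A_w − ∂_w A_x − [A_x, A_w]` turns out to be `(u'' − 2u³ − xu) · [[0, −1], [1, 0]]`: the diagonal
entries cancel identically and both off-diagonal entries are the Painlevé II defect, independently
of `w`. Since derivatives are unique, the existential form of the zero-curvature equation pins
down `Dx` and `Dw`, so it holds exactly when that scalar vanishes.
-/

open Matrix

/-- The `w`-member of the Painlevé II Lax pair. -/
noncomputable def laxAw (u u' : ℝ → ℝ) (x w : ℝ) : Matrix (Fin 2) (Fin 2) ℝ :=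
  !![u x ^ 2, -w * u x - u' x;
     -w * u x + u' x, w ^ 2 - x - u x ^ 2]

/-- The `x`-member of the Painlevé II Lax pair. -/
def laxAx (u : ℝ → ℝ) (x w : ℝ) : Matrix (Fin 2) (Fin 2) ℝ :=
  !![0, u x;
     u x, -w]

noncomputable def laxAwDerivX (u u' u'' : ℝ → ℝ) (x w : ℝ) : Matrix (Fin 2) (Fin 2) ℝ :=
  !![2 * u x * u' x, -w * u' x - u'' x;
     -w * u' x + u'' x, -1 - 2 * u x * u' x]

def laxAxDerivW : Matrix (Fin 2) (Fin 2) ℝ :=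
  !![0, 0;
     0, -1]

theorem hasDerivAt_laxAw_apply {u u' u'' : ℝ → ℝ} {x : ℝ} (hu : HasDerivAt u (u' x) x)
    (hu' : HasDerivAt u' (u'' x) x) (w : ℝ) (i j : Fin 2) :
    HasDerivAt (fun s => laxAw u u' s w i j) (laxAwDerivX u u' u'' x w i j) x := by
  fin_cases i <;> fin_cases j <;> simp only [laxAw, laxAwDerivX, Fin.zero_eta, Fin.mk_one,
    of_apply, cons_val', cons_val_zero, cons_val_one, empty_val', cons_val_fin_one]
  · exact (hu.fun_pow 2).congr_deriv (by norm_num)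
  · exact (hu.const_mul (-w)).sub hu'
  · exact (hu.const_mul (-w)).add hu'
  · exact (((hasDerivAt_const x (w ^ 2)).sub (hasDerivAt_id x)).sub (hu.fun_pow 2)).congr_deriv
      (by norm_num)

theorem hasDerivAt_laxAx_apply (u : ℝ → ℝ) (x w : ℝ) (i j : Fin 2) :
    HasDerivAt (fun s => laxAx u x s i j) (laxAxDerivW i j) w := by
  fin_cases i <;> fin_cases j <;> simp only [laxAx, laxAxDerivW, Fin.zero_eta, Fin.mk_one,
    of_apply, cons_val', cons_val_zero, cons_val_one, empty_val', cons_val_fin_one]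
  · exact hasDerivAt_const _ _
  · exact hasDerivAt_const _ _
  · exact hasDerivAt_const _ _
  · exact (hasDerivAt_id w).neg

theorem laxAwDerivX_sub_laxAxDerivW_sub_commutator (u u' u'' : ℝ → ℝ) (x w : ℝ) :
    laxAwDerivX u u' u'' x w - laxAxDerivW
        - (laxAx u x w * laxAw u u' x w - laxAw u u' x w * laxAx u x w)
      = (u'' x - (2 * u x ^ 3 + x * u x)) • !![0, -1; 1, 0] := by
  rw [laxAwDerivX, laxAxDerivW, laxAx, laxAw, mul_fin_two, mul_fin_two, smul_of]
  simp only [of_sub_of, cons_sub_cons, empty_sub_empty, smul_cons, smul_empty, smul_eq_mul]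
  ring_nf

theorem zeroCurvature_iff_painleveII (u u' u'' : ℝ → ℝ) (x w : ℝ) :
    laxAwDerivX u u' u'' x w - laxAxDerivW
        = laxAx u x w * laxAw u u' x w - laxAw u u' x w * laxAx u x w
      ↔ u'' x = 2 * u x ^ 3 + x * u x := by
  rw [← sub_eq_zero, laxAwDerivX_sub_laxAxDerivW_sub_commutator, ← sub_eq_zero (a := u'' x)]
  constructor
  · intro h
    simpa using congrFun (congrFun h 1) 0
  · intro h
    rw [h, zero_smul]

/-- **Lax pair compatibility and Painlevé II.**
For a twice differentiable `u` (with derivatives `u'`, `u''`), the zero-curvature equation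
`∂ₓ A_w − ∂_w A_x = [A_x, A_w]` holds at every `(x, w)` if and only if `u` satisfies the
Painlevé II equation `u'' = 2u³ + xu`.  The partial derivatives are encoded via
`HasDerivAt`, entrywise. -/
theorem stmt_18 (u u' u'' : ℝ → ℝ)
    (hu : ∀ x : ℝ, HasDerivAt u (u' x) x)
    (hu' : ∀ x : ℝ, HasDerivAt u' (u'' x) x) :
    (∀ x w : ℝ, ∃ Dx Dw : Matrix (Fin 2) (Fin 2) ℝ,
      (∀ i j : Fin 2, HasDerivAt (fun s => laxAw u u' s w i j) (Dx i j) x) ∧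
      (∀ i j : Fin 2, HasDerivAt (fun s => laxAx u x s i j) (Dw i j) w) ∧
      Dx - Dw = laxAx u x w * laxAw u u' x w - laxAw u u' x w * laxAx u x w)
    ↔ (∀ x : ℝ, u'' x = 2 * u x ^ 3 + x * u x) := by
  constructor
  · intro h x
    obtain ⟨Dx, Dw, hDx, hDw, hzc⟩ := h x 0
    have hDx_eq : Dx = laxAwDerivX u u' u'' x 0 := by
      ext i j; exact (hDx i j).unique (hasDerivAt_laxAw_apply (hu x) (hu' x) 0 i j)
    have hDw_eq : Dw = laxAxDerivW := by
      ext i j; exact (hDw i j).unique (hasDerivAt_laxAx_apply u x 0 i j)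
    rw [hDx_eq, hDw_eq] at hzc
    exact (zeroCurvature_iff_painleveII u u' u'' x 0).mp hzc
  · intro h x w
    exact ⟨_, _, hasDerivAt_laxAw_apply (hu x) (hu' x) w, hasDerivAt_laxAx_apply u x w,
      (zeroCurvature_iff_painleveII u u' u'' x w).mpr (h x)⟩
end

section
/- (First integral of Painlevé II.) Let u : ℝ → ℝ be twice continuously differentiable and satisfy u''(x) = 2u(x)³ + x·u(x) for all x ∈ ℝ. Suppose that u² is integrable on [x,∞) for every real x, and that u(x) → 0, u'(x) → 0 and x·u(x)² → 0 as x → +∞. Then for every x ∈ ℝ: ∫_x^∞ u(t)² dt + u(x)⁴ − u'(x)² + x·u(x)² = 0. -/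
/-!
Differentiating `v + u⁴ - (u')² + x u²` and substituting `u'' = 2u³ + xu` and `v' = -u²`, every
term cancels, so the expression is constant; the decay hypotheses make its limit at `+∞` zero.
-/

open MeasureTheory Set Filter Topology

section TailIntegral

variable {E : Type*} [NormedAddCommGroup E] [NormedSpace ℝ E] {f : ℝ → E}

theorem hasDerivAt_integral_Ici [CompleteSpace E] {a : ℝ} (hf : Continuous f) (ha : IntegrableOn f (Ioi a))
    (x : ℝ) : HasDerivAt (fun y => ∫ t in Ici y, f t) (-f x) x := by
  have htail : (fun y => ∫ t in Ici y, f t) = fun y => (∫ t in y..a, f t) + ∫ t in Ioi a, f t :=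
    funext fun y => by
      rw [integral_Ici_eq_integral_Ioi,
        intervalIntegral.integral_interval_add_Ioi' (hf.intervalIntegrable _ _) ha]
  rw [htail]
  exact (intervalIntegral.integral_hasDerivAt_left (hf.intervalIntegrable _ _)
    hf.aestronglyMeasurable.stronglyMeasurableAtFilter hf.continuousAt).add_const _

theorem tendsto_integral_Ici_atTop_zero :
    Tendsto (fun x => ∫ t in Ici x, f t) atTop (𝓝 0) := by
  simp only [integral_Ici_eq_integral_Ioi]
  exact tendsto_integral_Ioi_zero tendsto_id

end TailIntegral

theorem eq_of_hasDerivAt_zero_of_tendsto_atTop {F : ℝ → ℝ} {c : ℝ}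
    (hF : ∀ x, HasDerivAt F 0 x) (hlim : Tendsto F atTop (𝓝 c)) (x : ℝ) : F x = c := by
  have hconst : F = fun _ => F x :=
    funext fun y => is_const_of_deriv_eq_zero (fun z => (hF z).differentiableAt)
      (fun z => (hF z).deriv) y x
  rw [hconst] at hlim
  exact tendsto_nhds_unique tendsto_const_nhds hlim

theorem hasDerivAt_painleveII_firstIntegral {u u' v : ℝ → ℝ} {x : ℝ}
    (hu : HasDerivAt u (u' x) x) (hu' : HasDerivAt u' (2 * u x ^ 3 + x * u x) x)
    (hv : HasDerivAt v (-u x ^ 2) x) :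
    HasDerivAt (fun y => v y + u y ^ 4 - u' y ^ 2 + y * u y ^ 2) 0 x := by
  refine (((hv.fun_add (hu.fun_pow 4)).fun_sub (hu'.fun_pow 2)).fun_add
    ((hasDerivAt_id' x).fun_mul (hu.fun_pow 2))).congr_deriv ?_
  norm_num
  ring

/-- **First integral of Painlevé II (Section 6).**
If `u` is a twice continuously differentiable solution of `u'' = 2u³ + xu` with `u² `
integrable at `+∞` and `u, u', x u² → 0` as `x → +∞`, then
`∫ₓ^∞ u² + u⁴ − (u')² + x u² = 0` identically; in particular this holds for the
Hastings–McLeod solution. -/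
theorem stmt_19 (u : ℝ → ℝ) (hu : ContDiff ℝ 2 u)
    (hode : ∀ x : ℝ, deriv (deriv u) x = 2 * u x ^ 3 + x * u x)
    (hint : ∀ x : ℝ, IntegrableOn (fun t => u t ^ 2) (Set.Ici x))
    (hu0 : Filter.Tendsto u Filter.atTop (nhds 0))
    (hu'0 : Filter.Tendsto (deriv u) Filter.atTop (nhds 0))
    (hxu : Filter.Tendsto (fun x => x * u x ^ 2) Filter.atTop (nhds 0)) :
    ∀ x : ℝ, (∫ t in Set.Ici x, u t ^ 2) + u x ^ 4 - (deriv u x) ^ 2 + x * u x ^ 2 = 0 := by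
  have hud : Differentiable ℝ u := hu.differentiable (by norm_num)
  have hu'd : Differentiable ℝ (deriv u) :=
    (contDiff_succ_iff_deriv.mp hu).2.2.differentiable one_ne_zero
  refine eq_of_hasDerivAt_zero_of_tendsto_atTop (fun x => ?_) ?_
  · refine hasDerivAt_painleveII_firstIntegral (hud x).hasDerivAt ?_
      (hasDerivAt_integral_Ici (hu.continuous.pow 2) ((hint 0).mono_set Ioi_subset_Ici_self) x)
    exact hode x ▸ (hu'd x).hasDerivAt
  · simpa using ((tendsto_integral_Ici_atTop_zero.add (hu0.pow 4)).sub (hu'0.pow 2)).add hxu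
end
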